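/- arXiv:2109.07891 — 10 statements merged into one kernel-verified Lean document; each statement's English description precedes it below -/
import Mathlib

section
/- Let X be a complete metric space such that for every ε > 0, X is ε-coarsely injective, i.e. for every family of points (x_i)_{i∈I} in X and radii (r_i)_{i∈I} in [0,∞) with dist(x_i,x_j) ≤ r_i + r_j for all i,j ∈ I, the closed balls closedBall(x_i, r_i + ε) have a common point. Then X is injective. -/
/-- A metric space is injective (hyperconvex) if every family of closed balls whose
radii pairwise dominate the distances of the centers has a common point. -/
def IsInjectiveMetricSpace (X : Type) [MetricSpace X] : Prop :=
  ∀ (ι : Type) (x : ι → X) (r : ι → ℝ), (∀ i, 0 ≤ r i) →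
    (∀ i j, dist (x i) (x j) ≤ r i + r j) →
    (⋂ i, Metric.closedBall (x i) (r i)).Nonempty

/-- A metric space is `ε`-coarsely injective if under the same hypotheses the balls
enlarged by `ε` have a common point. -/
def IsCoarselyInjective (X : Type) [MetricSpace X] (ε : ℝ) : Prop :=
  ∀ (ι : Type) (x : ι → X) (r : ι → ℝ), (∀ i, 0 ≤ r i) →
    (∀ i j, dist (x i) (x j) ≤ r i + r j) →
    (⋂ i, Metric.closedBall (x i) (r i + ε)).Nonempty

/-- A complete metric space that is `ε`-coarsely injective for every `ε > 0` is injective. -/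
theorem stmt0 (X : Type) [MetricSpace X] [CompleteSpace X]
    (h : ∀ ε : ℝ, 0 < ε → IsCoarselyInjective X ε) :
    IsInjectiveMetricSpace X := by
  intro ι x r hr hd
  -- step lemma
  have key : ∀ (n : ℕ) (y : X), (∀ i, dist (x i) y ≤ r i + (1/2 : ℝ)^n) →
      ∃ z : X, (∀ i, dist (x i) z ≤ r i + (1/2 : ℝ)^(n+1)) ∧
        dist y z ≤ 2 * (1/2 : ℝ)^n := by
    intro n y hy
    have hpow : (0:ℝ) < (1/2 : ℝ)^n := by positivity
    have hpow' : (0:ℝ) < (1/2 : ℝ)^(n+1) := by positivity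
    set x' : Option ι → X := fun o => o.elim y x with hx'
    set r' : Option ι → ℝ := fun o => o.elim ((1/2:ℝ)^n) r with hr'
    have h1 : ∀ o, 0 ≤ r' o := by
      rintro (_|i)
      · simp [hr']
      · simpa [hr'] using hr i
    have h2 : ∀ o o', dist (x' o) (x' o') ≤ r' o + r' o' := by
      rintro (_|i) (_|j)
      · simp [hx', hr']
      · simpa [hx', hr', dist_comm, add_comm] using hy j
      · simpa [hx', hr'] using hy i
      · simpa [hx', hr'] using hd i j
    obtain ⟨z, hz⟩ := h ((1/2:ℝ)^(n+1)) hpow' (Option ι) x' r' h1 h2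
    simp only [Set.mem_iInter, Metric.mem_closedBall] at hz
    refine ⟨z, fun i => ?_, ?_⟩
    · have := hz (some i)
      simpa [hx', hr', dist_comm] using this
    · have := hz none
      have e : (1/2:ℝ)^n + (1/2:ℝ)^(n+1) ≤ 2 * (1/2:ℝ)^n := by
        rw [pow_succ]; nlinarith
      calc dist y z ≤ (1/2:ℝ)^n + (1/2:ℝ)^(n+1) := by
            simpa [hx', hr', dist_comm] using this
        _ ≤ 2 * (1/2:ℝ)^n := e
  -- initial point
  have h0 : ∃ y : X, ∀ i, dist (x i) y ≤ r i + (1/2:ℝ)^0 := by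
    obtain ⟨y, hy⟩ := h 1 one_pos ι x r hr hd
    simp only [Set.mem_iInter, Metric.mem_closedBall] at hy
    exact ⟨y, fun i => by simpa [dist_comm] using hy i⟩
  -- the sequence
  let u : ∀ n : ℕ, {y : X // ∀ i, dist (x i) y ≤ r i + (1/2:ℝ)^n} :=
    fun n => Nat.rec ⟨h0.choose, h0.choose_spec⟩
      (fun n p => ⟨(key n p.1 p.2).choose, (key n p.1 p.2).choose_spec.1⟩) n
  have hstep : ∀ n : ℕ, dist ((u n).1) ((u (n+1)).1) ≤ 2 * (1/2:ℝ)^n :=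
    fun n => (key n (u n).1 (u n).2).choose_spec.2
  have hcau : CauchySeq (fun n => (u n).1) :=
    cauchySeq_of_le_geometric (1/2 : ℝ) 2 (by norm_num) hstep
  obtain ⟨y, hy⟩ := cauchySeq_tendsto_of_complete hcau
  refine ⟨y, ?_⟩
  simp only [Set.mem_iInter, Metric.mem_closedBall]
  intro i
  rw [dist_comm]
  have hd' : Filter.Tendsto (fun n => dist (x i) ((u n).1)) Filter.atTop
      (nhds (dist (x i) y)) := (Continuous.dist continuous_const continuous_id).continuousAt.tendsto.comp hy
  refine le_of_tendsto_of_tendsto hd' ?_ (Filter.Eventually.of_forall fun n => (u n).2 i)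
  · have : Filter.Tendsto (fun n : ℕ => r i + (1/2:ℝ)^n) Filter.atTop (nhds (r i + 0)) := by
      exact Filter.Tendsto.const_add _ (tendsto_pow_atTop_nhds_zero_of_lt_one (by norm_num) (by norm_num))
    simpa using this
end

section
/- Assume L is a lattice in which every subset bounded above has a least upper bound, with a ℤ-action (f_t)_{t∈ℤ} by order automorphisms that is increasing and cofinal as in the context. Then for every x ∈ L and every k ∈ ℕ, the combinatorial ball of radius k around x in the thickening \hat{L} equals the interval I(f_{−k}(x), f_k(x)) = {y ∈ L : f_{−k}(x) ≤ y ≤ f_k(x)}. -/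
/-- A (connected) graph is Helly if every family of pairwise intersecting combinatorial
balls has a common vertex. -/
def IsHellyGraph {V : Type} (G : SimpleGraph V) : Prop :=
  G.Connected ∧
    ∀ (ι : Type) (x : ι → V) (r : ι → ℕ),
      (∀ i j, ∃ z, G.dist (x i) z ≤ r i ∧ G.dist (x j) z ≤ r j) →
      ∃ z, ∀ i, G.dist (x i) z ≤ r i

/-- The thickening of a lattice with a `ℤ`-action by order automorphisms:
two distinct elements `x, y` are adjacent when `f (-1) x ≤ y ≤ f 1 x`. -/
def thickening {L : Type} [Lattice L] (f : ℤ → L → L)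
    (hmono : ∀ t : ℤ, Monotone (f t))
    (hadd : ∀ (s t : ℤ) (x : L), f (s + t) x = f s (f t x))
    (hzero : ∀ x : L, f 0 x = x) : SimpleGraph L where
  Adj x y := x ≠ y ∧ f (-1) x ≤ y ∧ y ≤ f 1 x
  symm := by
    constructor
    intro x y h
    obtain ⟨hne, h1, h2⟩ := h
    have e1 : f (-1) (f 1 x) = x := by
      have h0 : ((-1 : ℤ) + 1) = 0 := by norm_num
      rw [← hadd, h0, hzero]
    have e2 : f 1 (f (-1) x) = x := by
      have h0 : ((1 : ℤ) + -1) = 0 := by norm_num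
      rw [← hadd, h0, hzero]
    refine ⟨hne.symm, ?_, ?_⟩
    · have h := hmono (-1) h2
      rwa [e1] at h
    · have h := hmono 1 h1
      rwa [e2] at h
  loopless := ⟨fun x h => h.1 rfl⟩

/-
A step in the thickening moves a point by at most one unit of the action, so a walk of length `n`
from `x` stays in `[f (-n) x, f n x]`. Conversely, if `y` lies in `[f (-(k+1)) x, f (k+1) x]`, then
`z = (f (-1) y ⊔ f (-k) x) ⊓ f k x` lies in `[f (-k) x, f k x]` and is equal or adjacent to `y`,
so induction on `k` produces a walk of length at most `k`. By cofinality any two points are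
joined by a walk, so the graph distance is realised by a walk.
-/

section Thickening

variable {L : Type} [Lattice L] {f : ℤ → L → L}
    (hmono : ∀ t : ℤ, Monotone (f t))
    (hadd : ∀ (s t : ℤ) (x : L), f (s + t) x = f s (f t x))
    (hzero : ∀ x : L, f 0 x = x)

include hmono hadd in
lemma apply_le_apply_add {x y : L} {t : ℤ} (s : ℤ) (h : y ≤ f t x) : f s y ≤ f (s + t) x := by
  rw [hadd]
  exact hmono s h

include hmono hadd in
lemma apply_add_le_apply {x y : L} {t : ℤ} (s : ℤ) (h : f t x ≤ y) : f (s + t) x ≤ f s y := by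
  rw [hadd]
  exact hmono s h

include hmono hadd in
lemma monotone_apply_of_increasing (hincr : ∀ t : ℤ, 0 < t → ∀ x : L, x < f t x) (x : L) :
    Monotone fun t => f t x :=
  monotone_int_of_le_succ fun t => by
    rw [hadd]
    exact hmono t (hincr 1 one_pos x).le

lemma mem_Icc_of_walk {x y : L} (p : (thickening f hmono hadd hzero).Walk x y) :
    y ∈ Set.Icc (f (-(p.length : ℤ)) x) (f p.length x) := by
  induction p with
  | nil => simp [hzero]
  | cons h q ih =>
    rw [SimpleGraph.Walk.length_cons, Nat.cast_succ, neg_add]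
    exact ⟨(apply_add_le_apply hmono hadd _ h.2.1).trans ih.1,
      ih.2.trans (apply_le_apply_add hmono hadd _ h.2.2)⟩

lemma exists_walk_length_le_of_mem_Icc (hincr : ∀ t : ℤ, 0 < t → ∀ x : L, x < f t x) (x : L) :
    ∀ {k : ℕ} {y : L}, y ∈ Set.Icc (f (-(k : ℤ)) x) (f k x) →
      ∃ p : (thickening f hmono hadd hzero).Walk x y, p.length ≤ k := by
  have mono := monotone_apply_of_increasing hmono hadd hincr
  intro k
  induction k with
  | zero =>
    intro y hy
    rw [Nat.cast_zero, neg_zero, hzero, Set.Icc_self, Set.mem_singleton_iff] at hy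
    subst hy
    exact ⟨.nil, le_rfl⟩
  | succ k ih =>
    rintro y ⟨hxy, hyx⟩
    set z := (f (-1) y ⊔ f (-(k : ℤ)) x) ⊓ f k x
    obtain ⟨p, hp⟩ := ih (y := z) ⟨le_inf le_sup_right (mono x (by omega)), inf_le_right⟩
    have hyz : f (-1) y ≤ z := by
      refine le_inf le_sup_left ?_
      have := apply_le_apply_add hmono hadd (-1) hyx
      rwa [show (-1 : ℤ) + ((k + 1 : ℕ) : ℤ) = k by push_cast; ring] at this
    have hzy : z ≤ f 1 y := by
      refine inf_le_left.trans (sup_le (mono y (by norm_num)) ?_)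
      have := apply_add_le_apply hmono hadd 1 hxy
      rwa [show (1 : ℤ) + -((k + 1 : ℕ) : ℤ) = -k by push_cast; ring] at this
    by_cases hz : z = y
    · exact ⟨p.copy rfl hz, by rw [SimpleGraph.Walk.length_copy]; omega⟩
    · have hadj : (thickening f hmono hadd hzero).Adj y z := ⟨Ne.symm hz, hyz, hzy⟩
      refine ⟨p.concat hadj.symm, ?_⟩
      rw [SimpleGraph.Walk.length_concat]
      omega

lemma thickening_preconnected (hincr : ∀ t : ℤ, 0 < t → ∀ x : L, x < f t x)
    (hcof : ∀ x y : L, ∃ t : ℕ, f (-(t : ℤ)) x ≤ y ∧ y ≤ f (t : ℤ) x) :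
    (thickening f hmono hadd hzero).Preconnected := fun x y =>
  have ⟨_, hy⟩ := hcof x y
  have ⟨p, _⟩ := exists_walk_length_le_of_mem_Icc hmono hadd hzero hincr x hy
  ⟨p⟩

end Thickening

theorem stmt4_general (L : Type) [Lattice L] (f : ℤ → L → L)
    (hmono : ∀ t : ℤ, Monotone (f t))
    (hadd : ∀ (s t : ℤ) (x : L), f (s + t) x = f s (f t x))
    (hzero : ∀ x : L, f 0 x = x)
    (hincr : ∀ t : ℤ, 0 < t → ∀ x : L, x < f t x)
    (hcof : ∀ x y : L, ∃ t : ℕ, f (-(t : ℤ)) x ≤ y ∧ y ≤ f (t : ℤ) x)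
    (x : L) (k : ℕ) :
    {y : L | (thickening f hmono hadd hzero).dist x y ≤ k} =
      Set.Icc (f (-(k : ℤ)) x) (f (k : ℤ) x) := by
  ext y
  constructor
  · intro hy
    obtain ⟨p, hp⟩ :=
      (thickening_preconnected hmono hadd hzero hincr hcof x y).exists_walk_length_eq_dist
    have hk : (p.length : ℤ) ≤ k := by rw [hp]; exact_mod_cast hy
    have mono := monotone_apply_of_increasing hmono hadd hincr x
    exact Set.Icc_subset_Icc (mono (neg_le_neg hk)) (mono hk) (mem_Icc_of_walk hmono hadd hzero p)
  · intro hy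
    obtain ⟨p, hp⟩ := exists_walk_length_le_of_mem_Icc hmono hadd hzero hincr x hy
    exact (SimpleGraph.dist_le p).trans hp

/-- In the thickening of a lattice with a suitable increasing cofinal `ℤ`-action,
the combinatorial ball of radius `k` around `x` is the interval `[f (-k) x, f k x]`. -/
theorem stmt4 (L : Type) [Lattice L] (f : ℤ → L → L)
    (hmono : ∀ t : ℤ, Monotone (f t))
    (hadd : ∀ (s t : ℤ) (x : L), f (s + t) x = f s (f t x))
    (hzero : ∀ x : L, f 0 x = x)
    (hincr : ∀ t : ℤ, 0 < t → ∀ x : L, x < f t x)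
    (hcof : ∀ x y : L, ∃ t : ℕ, f (-(t : ℤ)) x ≤ y ∧ y ≤ f (t : ℤ) x)
    (hlub : ∀ s : Set L, s.Nonempty → BddAbove s → ∃ a, IsLUB s a)
    (x : L) (k : ℕ) :
    {y : L | (thickening f hmono hadd hzero).dist x y ≤ k} =
      Set.Icc (f (-(k : ℤ)) x) (f (k : ℤ) x) :=
  stmt4_general L f hmono hadd hzero hincr hcof x k
end

section
/- Let L be a lattice in which every subset that is bounded above has a least upper bound. Then the intervals of L satisfy the Helly property: for any nonempty family of pairs x_i ≤ y_i (i ∈ I) such that the intervals I(x_i,y_i) = {z ∈ L : x_i ≤ z ≤ y_i} pairwise intersect, the global intersection ⋂_{i∈I} I(x_i,y_i) is nonempty. -/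
/-- In a lattice in which every subset bounded above has a least upper bound, the closed
intervals satisfy the Helly property. -/
theorem stmt5 (L : Type) [Lattice L]
    (hlub : ∀ s : Set L, s.Nonempty → BddAbove s → ∃ a, IsLUB s a)
    (ι : Type) [Nonempty ι] (x y : ι → L) (hxy : ∀ i, x i ≤ y i)
    (hpair : ∀ i j, (Set.Icc (x i) (y i) ∩ Set.Icc (x j) (y j)).Nonempty) :
    (⋂ i, Set.Icc (x i) (y i)).Nonempty := by
  have hle : ∀ i j, x i ≤ y j := by
    intro i j
    obtain ⟨z, ⟨hz1, _⟩, ⟨_, hz2⟩⟩ := hpair i j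
    exact hz1.trans hz2
  obtain ⟨a, ha⟩ := hlub (Set.range x) (Set.range_nonempty x)
    ⟨y (Classical.arbitrary ι), by rintro _ ⟨i, rfl⟩; exact hle i _⟩
  refine ⟨a, Set.mem_iInter.2 fun i => ⟨ha.1 ⟨i, rfl⟩, ha.2 ?_⟩⟩
  rintro _ ⟨j, rfl⟩; exact hle j i
end

section
/- For H = ℤ, the relation ≤_M is a partial order on the affine version M_ℤ of L, and the poset (M_ℤ, ≤_M) is a lattice: any two elements have a meet and a join. -/
/-- A point of the affine version of `L` over `H`: a maximal chain
`c : ⊥ = c₀ < c₁ < ⋯ < cₙ = ⊤` of `L` together with a nondecreasing tuple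
`u = (u₁ ≤ ⋯ ≤ uₙ)` of elements of `H` (indexed here by `Fin n`, so `u ⟨k⟩ = u_{k+1}`). -/
structure AffinePt (L : Type) [Lattice L] [BoundedOrder L] (n : ℕ)
    (H : Type) [Preorder H] : Type where
  c : Fin (n + 1) → L
  hc0 : c 0 = ⊥
  hcn : c (Fin.last n) = ⊤
  hcmono : StrictMono c
  u : Fin n → H
  humono : Monotone u

/-- The basic identification: `(c, u)` and `(c', u)` are identified whenever
`u_i = u_{i+1}` for every index `1 ≤ i ≤ n - 1` with `c_i ≠ c'_i`. -/
def basicRel {L : Type} [Lattice L] [BoundedOrder L] {n : ℕ} {H : Type} [Preorder H]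
    (p q : AffinePt L n H) : Prop :=
  p.u = q.u ∧ ∀ (j : ℕ) (hj : j + 1 < n),
    p.c ⟨j + 1, by omega⟩ ≠ q.c ⟨j + 1, by omega⟩ →
      p.u ⟨j, by omega⟩ = p.u ⟨j + 1, hj⟩

/-- The affine version `M_H` of `L` over `H`: the quotient of the set of pairs `(c, u)`
by the equivalence relation generated by `basicRel`. -/
abbrev AffineVersion (L : Type) [Lattice L] [BoundedOrder L] (n : ℕ)
    (H : Type) [Preorder H] : Type :=
  Quot (basicRel (L := L) (n := n) (H := H))

/-- The class `[c, u]` of a pair `(c, u)` in the affine version. -/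
def mkA {L : Type} [Lattice L] [BoundedOrder L] {n : ℕ} {H : Type} [Preorder H]
    (p : AffinePt L n H) : AffineVersion L n H :=
  Quot.mk _ p

/-- One step of the order: `α ≤ β` via representatives `[c, x]`, `[c, y]` with the same
chain `c` and `x ≤ y` coordinatewise. -/
def stepLe {L : Type} [Lattice L] [BoundedOrder L] {n : ℕ} {H : Type} [Preorder H]
    (α β : AffineVersion L n H) : Prop :=
  ∃ p q : AffinePt L n H, mkA p = α ∧ mkA q = β ∧ p.c = q.c ∧ ∀ k, p.u k ≤ q.u k

/-- The order `≤_M` on the affine version: the reflexive-transitive closure of `stepLe`,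
i.e. existence of a finite sequence of one-chain comparisons. -/
def leM {L : Type} [Lattice L] [BoundedOrder L] {n : ℕ} {H : Type} [Preorder H]
    (α β : AffineVersion L n H) : Prop :=
  Relation.ReflTransGen stepLe α β

/-!
A point `[c, u]` is recorded by its profile `t ↦ c_{#{k | u_k ≤ t}}`, a monotone map `ℤ → L`
equal to `⊥` near `-∞` and to `⊤` near `+∞`. The grading makes the profile a complete invariant
of the class, and every such map is a profile: extend its range to a maximal chain. A step
`[c, x] ≤ [c, y]` lowers the profile pointwise. Conversely, if `g ≤ f` are profiles, one gets
from `f` to `g` by replacing the values `f s` by `g s` one time `s` at a time; each replacement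
happens inside the chain `g(≤ s) ∪ f(≥ s)`, hence on a common maximal chain, so it is one step.
Thus `≤_M` is the reverse of the pointwise order on profiles, and meets and joins are computed
pointwise.
-/

open Set Filter

lemma isChain_image_Iic_union_image_Ici {α β : Type*} [LinearOrder α] [Preorder β] {f g : α → β}
    (hf : Monotone f) (hg : Monotone g) (hgf : g ≤ f) (s : α) :
    IsChain (· ≤ ·) (g '' Iic s ∪ f '' Ici s) := by
  rintro _ (⟨a, ha, rfl⟩ | ⟨a, ha, rfl⟩) _ (⟨b, hb, rfl⟩ | ⟨b, hb, rfl⟩) -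
  · exact (le_total a b).imp (fun h => hg h) (fun h => hg h)
  · exact Or.inl ((hg (ha.trans hb)).trans (hgf b))
  · exact Or.inr ((hg (hb.trans ha)).trans (hgf a))
  · exact (le_total a b).imp (fun h => hf h) (fun h => hf h)

lemma StrictMono.eq_of_le_or_le {α β : Type*} [PartialOrder α] [Preorder β] {rk : α → β}
    (hrk : StrictMono rk) {x y : α} (hxy : x ≤ y ∨ y ≤ x) (h : rk x = rk y) : x = y := by
  rcases hxy with hxy | hxy
  · exact hxy.eq_of_not_lt fun hlt => (hrk hlt).ne h
  · exact (hxy.eq_of_not_lt fun hlt => (hrk hlt).ne h.symm).symm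

lemma Monotone.reflect_lt_of_le_or_le {α β : Type*} [PartialOrder α] [Preorder β] {rk : α → β}
    (hrk : Monotone rk) {x y : α} (hxy : x ≤ y ∨ y ≤ x) (h : rk x < rk y) : x < y := by
  rcases hxy with hxy | hxy
  · exact hxy.lt_of_ne fun he => h.ne (congrArg rk he)
  · exact absurd (hrk hxy) h.not_ge

structure IsProfile {L : Type*} [Preorder L] [BoundedOrder L] (f : ℤ → L) : Prop where
  mono : Monotone f
  eventually_bot : ∀ᶠ t in atBot, f t = ⊥
  eventually_top : ∀ᶠ t in atTop, f t = ⊤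

structure IsRankFunction {L : Type*} [PartialOrder L] [BoundedOrder L] (rk : L → ℕ) (n : ℕ) :
    Prop where
  map_bot : rk ⊥ = 0
  map_top : rk ⊤ = n
  strictMono : StrictMono rk
  covBy : ∀ x y : L, x ⋖ y → rk y = rk x + 1

namespace IsProfile

section Preorder

variable {L : Type*} [Preorder L] [BoundedOrder L] {f g : ℤ → L}

lemma piecewise (hf : IsProfile f) (hg : IsProfile g) (hgf : g ≤ f) (s : ℤ) :
    IsProfile fun t => if t ≤ s then g t else f t where
  mono a b hab := by
    by_cases hb : b ≤ s
    · simp only [hab.trans hb, hb, if_true]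
      exact hg.mono hab
    · by_cases ha : a ≤ s
      · simp only [ha, hb, if_true, if_false]
        exact (hg.mono hab).trans (hgf b)
      · simp only [ha, hb, if_false]
        exact hf.mono hab
  eventually_bot := ((eventually_le_atBot s).and hg.eventually_bot).mono fun t h => by
    simp [h.1, h.2]
  eventually_top := ((eventually_gt_atTop s).and hf.eventually_top).mono fun t h => by
    simp [not_le.2 h.1, h.2]

end Preorder

section Lattice

variable {L : Type*} [Lattice L] [BoundedOrder L] {f g : ℤ → L}

lemma sup (hf : IsProfile f) (hg : IsProfile g) : IsProfile (f ⊔ g) where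
  mono := hf.mono.sup hg.mono
  eventually_bot := (hf.eventually_bot.and hg.eventually_bot).mono fun t h => by simp [h.1, h.2]
  eventually_top := hf.eventually_top.mono fun t h => by simp [h]

lemma inf (hf : IsProfile f) (hg : IsProfile g) : IsProfile (f ⊓ g) where
  mono := hf.mono.inf hg.mono
  eventually_bot := hf.eventually_bot.mono fun t h => by simp [h]
  eventually_top := (hf.eventually_top.and hg.eventually_top).mono fun t h => by simp [h.1, h.2]

end Lattice

end IsProfile

namespace AffinePt

variable {L : Type} [Lattice L] [BoundedOrder L] {n : ℕ}

def count (p : AffinePt L n ℤ) (t : ℤ) : ℕ :=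
  (Finset.univ.filter fun k => p.u k ≤ t).card

lemma lt_count_iff (p : AffinePt L n ℤ) (t : ℤ) (k : Fin n) : (k : ℕ) < p.count t ↔ p.u k ≤ t := by
  constructor
  · intro hk
    by_contra hkt
    have hsub : (Finset.univ.filter fun j => p.u j ≤ t) ⊆ Finset.Iio k := fun j hj => by
      simp only [Finset.mem_filter, Finset.mem_univ, true_and] at hj
      exact Finset.mem_Iio.2 (lt_of_not_ge fun hkj => hkt ((p.humono hkj).trans hj))
    have := (Finset.card_le_card hsub).trans_eq (Fin.card_Iio k)
    exact lt_irrefl _ (hk.trans_le this)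
  · intro hkt
    have hsub : Finset.Iic k ⊆ Finset.univ.filter fun j => p.u j ≤ t := fun j hj => by
      simp only [Finset.mem_filter, Finset.mem_univ, true_and]
      exact (p.humono (Finset.mem_Iic.1 hj)).trans hkt
    exact Nat.lt_of_succ_le ((Fin.card_Iic k).symm.trans_le (Finset.card_le_card hsub))

lemma count_le (p : AffinePt L n ℤ) (t : ℤ) : p.count t ≤ n :=
  (Finset.card_filter_le _ _).trans_eq (Finset.card_fin n)

lemma count_eq_of_forall_lt_iff (p : AffinePt L n ℤ) {t : ℤ} {m : ℕ} (hm : m ≤ n)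
    (h : ∀ k : Fin n, (k : ℕ) < m ↔ p.u k ≤ t) : p.count t = m := by
  refine le_antisymm (not_lt.1 fun hlt => ?_) (not_lt.1 fun hlt => ?_)
  · have hk := (h ⟨m, hlt.trans_le (p.count_le t)⟩).2 ((p.lt_count_iff t _).1 hlt)
    exact lt_irrefl _ hk
  · have hk := (p.lt_count_iff t ⟨p.count t, hlt.trans_le hm⟩).2 ((h _).1 hlt)
    exact lt_irrefl _ hk

lemma count_le_count_iff {p q : AffinePt L n ℤ} : (∀ t, q.count t ≤ p.count t) ↔ p.u ≤ q.u := by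
  refine ⟨fun h k => (p.lt_count_iff _ k).1 (((q.lt_count_iff _ k).2 le_rfl).trans_le (h _)),
    fun h t => Finset.card_le_card fun k hk => ?_⟩
  simp only [Finset.mem_filter, Finset.mem_univ, true_and] at hk ⊢
  exact (h k).trans hk

lemma count_mono (p : AffinePt L n ℤ) : Monotone p.count := fun _ _ hst =>
  Finset.card_le_card fun k hk => by
    simp only [Finset.mem_filter, Finset.mem_univ, true_and] at hk ⊢
    exact hk.trans hst

def profile (p : AffinePt L n ℤ) (t : ℤ) : L :=
  p.c ⟨p.count t, Nat.lt_succ_of_le (p.count_le t)⟩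

lemma profile_eq_of_count_eq (p : AffinePt L n ℤ) {t : ℤ} {k : Fin (n + 1)}
    (h : p.count t = k) : p.profile t = p.c k :=
  congrArg p.c (Fin.ext h)

lemma profile_le_profile_iff {p q : AffinePt L n ℤ} (hc : p.c = q.c) :
    q.profile ≤ p.profile ↔ p.u ≤ q.u := by
  rw [← count_le_count_iff]
  simp only [Pi.le_def, profile, hc, q.hcmono.le_iff_le, Fin.mk_le_mk]

lemma isProfile_profile (p : AffinePt L n ℤ) : IsProfile p.profile where
  mono _ _ hst := p.hcmono.monotone <| Fin.mk_le_mk.2 <| p.count_mono hst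
  eventually_bot := by
    filter_upwards [eventually_all.2 fun k => eventually_lt_atBot (p.u k)] with t ht
    rw [p.profile_eq_of_count_eq (k := 0) (p.count_eq_of_forall_lt_iff (Nat.zero_le n)
      fun k => iff_of_false (Nat.not_lt_zero _) (ht k).not_ge), p.hc0]
  eventually_top := by
    filter_upwards [eventually_all.2 fun k => eventually_ge_atTop (p.u k)] with t ht
    rw [p.profile_eq_of_count_eq (k := Fin.last n) (p.count_eq_of_forall_lt_iff le_rfl
      fun k => iff_of_true k.2 (ht k)), p.hcn]

lemma profile_eq_of_basicRel {p q : AffinePt L n ℤ} (h : basicRel p q) :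
    p.profile = q.profile := by
  have hcount : p.count = q.count := by unfold count; rw [h.1]
  funext t
  obtain ⟨m, hm⟩ : ∃ m, p.count t = m := ⟨_, rfl⟩
  have hmq : q.count t = m := hcount ▸ hm
  rcases m with _ | j
  · rw [p.profile_eq_of_count_eq (k := 0) hm, q.profile_eq_of_count_eq (k := 0) hmq, p.hc0, q.hc0]
  by_cases hj : j + 1 < n
  · rw [p.profile_eq_of_count_eq (k := ⟨j + 1, by omega⟩) hm,
      q.profile_eq_of_count_eq (k := ⟨j + 1, by omega⟩) hmq]
    by_contra hne
    -- `j < count ≤ j + 1` puts `t` between `u_j` and `u_{j+1}`, which `basicRel` makes equal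
    have hle : p.u ⟨j, by omega⟩ ≤ t := (p.lt_count_iff t _).1 (by simp [hm])
    have hgt : ¬ p.u ⟨j + 1, hj⟩ ≤ t := by rw [← p.lt_count_iff]; simp [hm]
    exact hgt (h.2 j hj hne ▸ hle)
  · have hn : j + 1 = (Fin.last n : ℕ) := by have := p.count_le t; rw [Fin.val_last]; omega
    rw [p.profile_eq_of_count_eq (hm.trans hn), q.profile_eq_of_count_eq (hmq.trans hn),
      p.hcn, q.hcn]

end AffinePt

namespace AffineVersion

variable {L : Type} [Lattice L] [BoundedOrder L] {n : ℕ}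

def profile : AffineVersion L n ℤ → ℤ → L :=
  Quot.lift AffinePt.profile fun _ _ => AffinePt.profile_eq_of_basicRel

lemma isProfile_profile (α : AffineVersion L n ℤ) : IsProfile α.profile :=
  Quot.ind (β := fun α => IsProfile (profile α)) (fun p => p.isProfile_profile) α

lemma profile_anti_of_stepLe {α β : AffineVersion L n ℤ} (h : stepLe α β) :
    β.profile ≤ α.profile := by
  obtain ⟨p, q, rfl, rfl, hc, hu⟩ := h
  exact (AffinePt.profile_le_profile_iff hc).2 hu

lemma profile_anti_of_leM {α β : AffineVersion L n ℤ} (h : leM α β) : β.profile ≤ α.profile := by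
  induction h with
  | refl => exact le_rfl
  | tail _ hstep ih => exact (profile_anti_of_stepLe hstep).trans ih

end AffineVersion


lemma IsProfile.exists_affinePt_of_range_subset {L : Type} [Lattice L] [BoundedOrder L] {n : ℕ}
    {f : ℤ → L} (hf : IsProfile f) (c : Fin (n + 1) → L) (hc0 : c 0 = ⊥)
    (hcn : c (Fin.last n) = ⊤) (hcmono : StrictMono c) (hfc : range f ⊆ range c) :
    ∃ p : AffinePt L n ℤ, p.c = c ∧ p.profile = f := by
  -- `u k` is the first time at which `f` reaches `c (k + 1)`
  have hfirst : ∀ k : Fin n, ∃ a, c k.succ ≤ f a ∧ ∀ t, c k.succ ≤ f t → a ≤ t := fun k => by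
    obtain ⟨a, ha⟩ := eventually_atBot.1 hf.eventually_bot
    obtain ⟨b, hb⟩ := eventually_atTop.1 hf.eventually_top
    refine Int.exists_least_of_bdd ⟨a, fun t ht => le_of_lt (not_le.1 fun hta => ?_)⟩
      ⟨b, (hb b le_rfl).symm ▸ le_top⟩
    rw [ha t hta, ← hc0] at ht
    exact (hcmono (Fin.succ_pos k)).not_ge ht
  choose u hu_mem hu_least using hfirst
  have hu : ∀ k t, u k ≤ t ↔ c k.succ ≤ f t :=
    fun k t => ⟨fun h => (hu_mem k).trans (hf.mono h), hu_least k t⟩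
  have humono : Monotone u := fun j k hjk =>
    hu_least j _ ((hcmono.monotone (Fin.succ_le_succ_iff.2 hjk)).trans (hu_mem k))
  refine ⟨⟨c, hc0, hcn, hcmono, u, humono⟩, rfl, funext fun t => ?_⟩
  obtain ⟨j, hj⟩ := hfc (mem_range_self t)
  refine (AffinePt.profile_eq_of_count_eq _ (k := j) ?_).trans hj
  refine AffinePt.count_eq_of_forall_lt_iff _ (Nat.lt_succ_iff.1 j.2) fun k => ?_
  change (k : ℕ) < j ↔ u k ≤ t
  rw [hu, ← hj, hcmono.le_iff_le, Fin.le_def, Fin.val_succ]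
  omega

section PartialOrder

variable {L : Type*} [PartialOrder L] [BoundedOrder L] {n : ℕ} {rk : L → ℕ}

lemma rk_le (hrkn : rk ⊤ = n) (hrk : StrictMono rk) (x : L) : rk x ≤ n :=
  hrkn ▸ hrk.monotone le_top

lemma Flag.exists_rk_eq (hrk : IsRankFunction rk n) (s : Flag L) {k : ℕ} (hk : k ≤ n) :
    ∃ x ∈ s, rk x = k := by
  have : WellFoundedLT s := (hrk.strictMono.comp (Subtype.strictMono_coe _)).wellFoundedLT
  have : IsStronglyAtomic s := IsStronglyAtomic.of_wellFounded_lt wellFounded_lt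
  induction k with
  | zero => exact ⟨⊥, s.bot_mem, hrk.map_bot⟩
  | succ k ih =>
    obtain ⟨x, hxs, rfl⟩ := ih (by omega)
    have hx : (⟨x, hxs⟩ : s) < ⟨⊤, s.top_mem⟩ :=
      hrk.strictMono.monotone.reflect_lt_of_le_or_le (Or.inl le_top)
        (show rk x < rk ⊤ by rw [hrk.map_top]; omega)
    obtain ⟨y, hxy, -⟩ := exists_covBy_le_of_lt hx
    exact ⟨y, y.2, hrk.covBy _ _ (Flag.coe_covBy_coe.2 hxy)⟩

lemma IsChain.exists_subset_range_fin (hrk : IsRankFunction rk n) {S : Set L}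
    (hS : IsChain (· ≤ ·) S) :
    ∃ c : Fin (n + 1) → L, c 0 = ⊥ ∧ c (Fin.last n) = ⊤ ∧ StrictMono c ∧ S ⊆ range c := by
  obtain ⟨s, hSs⟩ := hS.exists_subset_flag
  choose c hcs hrkc using fun k : Fin (n + 1) => Flag.exists_rk_eq hrk s (Nat.lt_succ_iff.1 k.2)
  refine ⟨c, ?_, ?_, fun i j hij => ?_, fun x hx => ?_⟩
  · exact hrk.strictMono.eq_of_le_or_le (Or.inr bot_le) ((hrkc 0).trans hrk.map_bot.symm)
  · exact hrk.strictMono.eq_of_le_or_le (Or.inl le_top) ((hrkc _).trans hrk.map_top.symm)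
  · exact hrk.strictMono.monotone.reflect_lt_of_le_or_le (s.le_or_le (hcs i) (hcs j))
      (by rw [hrkc, hrkc]; exact hij)
  · refine ⟨⟨rk x, Nat.lt_succ_of_le (rk_le hrk.map_top hrk.strictMono x)⟩, ?_⟩
    exact hrk.strictMono.eq_of_le_or_le (s.le_or_le (hcs _) (hSs hx)) (hrkc _)

end PartialOrder

lemma leM_of_forall_stepLe_succ {L : Type} [Lattice L] [BoundedOrder L] {n : ℕ}
    {γ : ℤ → AffineVersion L n ℤ} (h : ∀ s, stepLe (γ s) (γ (s + 1))) {a b : ℤ} (hab : a ≤ b) :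
    leM (γ a) (γ b) := by
  induction b, hab using Int.leInduction with
  | base => exact .refl
  | succ s _ ih => exact ih.tail (h s)

section Lattice

variable {L : Type} [Lattice L] [BoundedOrder L] {n : ℕ} {rk : L → ℕ}

lemma AffinePt.rk_c (hrkn : rk ⊤ = n) (hrk : StrictMono rk) (p : AffinePt L n ℤ)
    (k : Fin (n + 1)) : rk (p.c k) = k := by
  let g : Fin (n + 1) → Fin (n + 1) := fun k => ⟨rk (p.c k), Nat.lt_succ_of_le (rk_le hrkn hrk _)⟩
  have hg : StrictMono g := fun i j hij => Fin.mk_lt_mk.2 (hrk (p.hcmono hij))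
  exact congrArg Fin.val (le_antisymm hg.apply_le hg.le_apply : g k = k)

lemma AffinePt.rk_profile (hrkn : rk ⊤ = n) (hrk : StrictMono rk) (p : AffinePt L n ℤ) (t : ℤ) :
    rk (p.profile t) = p.count t :=
  p.rk_c hrkn hrk _

lemma AffinePt.basicRel_of_profile_eq (hrkn : rk ⊤ = n) (hrk : StrictMono rk)
    {p q : AffinePt L n ℤ} (h : p.profile = q.profile) : basicRel p q := by
  have hcount : ∀ t, p.count t = q.count t := fun t => by
    rw [← p.rk_profile hrkn hrk, ← q.rk_profile hrkn hrk, h]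
  have hu : p.u = q.u :=
    le_antisymm (AffinePt.count_le_count_iff.1 fun t => (hcount t).ge)
      (AffinePt.count_le_count_iff.1 fun t => (hcount t).le)
  refine ⟨hu, fun j hj hne => ?_⟩
  by_contra hu_ne
  -- at time `u_j < u_{j+1}` both profiles sit at level `j + 1` of their chains
  set t := p.u ⟨j, by omega⟩
  have hlt : t < p.u ⟨j + 1, hj⟩ := (p.humono (Fin.mk_le_mk.2 (Nat.le_succ j))).lt_of_ne hu_ne
  have hj1 : p.count t = j + 1 := le_antisymm
    (not_lt.1 fun h' => (p.lt_count_iff t ⟨j + 1, hj⟩).1 h' |>.not_gt hlt)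
    ((p.lt_count_iff t ⟨j, by omega⟩).2 le_rfl)
  apply hne
  rw [← p.profile_eq_of_count_eq hj1, ← q.profile_eq_of_count_eq ((hcount t).symm.trans hj1), h]

lemma AffineVersion.profile_injective (hrkn : rk ⊤ = n) (hrk : StrictMono rk) :
    Function.Injective (AffineVersion.profile : AffineVersion L n ℤ → ℤ → L) := by
  rintro ⟨p⟩ ⟨q⟩ h
  exact Quot.sound (AffinePt.basicRel_of_profile_eq hrkn hrk h)

lemma IsProfile.exists_affineVersion (hrk : IsRankFunction rk n) {f : ℤ → L}
    (hf : IsProfile f) : ∃ α : AffineVersion L n ℤ, α.profile = f := by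
  obtain ⟨c, hc0, hcn, hcmono, hfc⟩ := hf.mono.isChain_range.exists_subset_range_fin hrk
  obtain ⟨p, -, hp⟩ := hf.exists_affinePt_of_range_subset c hc0 hcn hcmono hfc
  exact ⟨mkA p, hp⟩

lemma stepLe_of_isChain (hrk : IsRankFunction rk n) {α β : AffineVersion L n ℤ}
    (hle : β.profile ≤ α.profile) {S : Set L} (hS : IsChain (· ≤ ·) S)
    (hαS : range α.profile ⊆ S) (hβS : range β.profile ⊆ S) : stepLe α β := by
  obtain ⟨c, hc0, hcn, hcmono, hSc⟩ := hS.exists_subset_range_fin hrk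
  obtain ⟨p, hpc, hp⟩ := α.isProfile_profile.exists_affinePt_of_range_subset c hc0 hcn hcmono
    (hαS.trans hSc)
  obtain ⟨q, hqc, hq⟩ := β.isProfile_profile.exists_affinePt_of_range_subset c hc0 hcn hcmono
    (hβS.trans hSc)
  refine ⟨p, q, AffineVersion.profile_injective hrk.map_top hrk.strictMono hp,
    AffineVersion.profile_injective hrk.map_top hrk.strictMono hq, hpc.trans hqc.symm, ?_⟩
  exact (AffinePt.profile_le_profile_iff (hpc.trans hqc.symm)).1 (hp ▸ hq ▸ hle)

lemma leM_of_profile_le (hrk : IsRankFunction rk n) {α β : AffineVersion L n ℤ}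
    (hle : β.profile ≤ α.profile) : leM α β := by
  have hf := α.isProfile_profile
  have hg := β.isProfile_profile
  choose γ hγ using fun s : ℤ => (hf.piecewise hg hle s).exists_affineVersion hrk
  have hstep : ∀ s, stepLe (γ s) (γ (s + 1)) := fun s => by
    refine stepLe_of_isChain hrk ?_
      (isChain_image_Iic_union_image_Ici hf.mono hg.mono hle (s + 1)) ?_ ?_
    · intro t
      simp only [hγ]
      split_ifs <;> first | exact le_rfl | exact hle t | omega
    all_goals
      rintro _ ⟨t, rfl⟩
      simp only [hγ]
      split_ifs with ht
      · exact Or.inl ⟨t, by simp only [mem_Iic]; omega, rfl⟩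
      · exact Or.inr ⟨t, by simp only [mem_Ici]; omega, rfl⟩
  obtain ⟨a, ha⟩ := eventually_atBot.1 (hf.eventually_bot.and hg.eventually_bot)
  obtain ⟨b, hb⟩ := eventually_atTop.1 (hf.eventually_top.and hg.eventually_top)
  have hα : γ a = α := AffineVersion.profile_injective hrk.map_top hrk.strictMono <| by
    ext t
    rw [hγ]
    dsimp only
    split_ifs with ht
    · rw [(ha t ht).1, (ha t ht).2]
    · rfl
  have hβ : γ (max a b) = β := AffineVersion.profile_injective hrk.map_top hrk.strictMono <| by
    ext t
    rw [hγ]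
    dsimp only
    split_ifs with ht
    · rfl
    · have htb := (hb t (by omega))
      rw [htb.1, htb.2]
  exact hα ▸ hβ ▸ leM_of_forall_stepLe_succ hstep (le_max_left a b)

lemma leM_iff_profile_le (hrk : IsRankFunction rk n) {α β : AffineVersion L n ℤ} :
    leM α β ↔ β.profile ≤ α.profile :=
  ⟨AffineVersion.profile_anti_of_leM, leM_of_profile_le hrk⟩

end Lattice

/-- For a bounded graded lattice `L` of rank `n`, the relation `≤_M` is a partial
order on the affine version `M_ℤ`, and `(M_ℤ, ≤_M)` is a lattice. -/
theorem stmt8 (L : Type) [Lattice L] [BoundedOrder L] (n : ℕ)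
    (rk : L → ℕ) (hrk0 : rk ⊥ = 0) (hrkn : rk ⊤ = n)
    (hrkmono : StrictMono rk)
    (hrkcov : ∀ x y : L, x ⋖ y → rk y = rk x + 1) :
    (∀ α : AffineVersion L n ℤ, leM α α) ∧
    (∀ α β : AffineVersion L n ℤ, leM α β → leM β α → α = β) ∧
    (∀ α β γ : AffineVersion L n ℤ, leM α β → leM β γ → leM α γ) ∧
    (∀ α β : AffineVersion L n ℤ,
      ∃ m, leM m α ∧ leM m β ∧ ∀ w, leM w α → leM w β → leM w m) ∧
    (∀ α β : AffineVersion L n ℤ,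
      ∃ j, leM α j ∧ leM β j ∧ ∀ w, leM α w → leM β w → leM j w) := by
  have hrk : IsRankFunction rk n := ⟨hrk0, hrkn, hrkmono, hrkcov⟩
  have hle : ∀ α β : AffineVersion L n ℤ, leM α β ↔ β.profile ≤ α.profile :=
    fun _ _ => leM_iff_profile_le hrk
  have hrealize : ∀ {f : ℤ → L}, IsProfile f → ∃ α : AffineVersion L n ℤ, α.profile = f :=
    fun hf => hf.exists_affineVersion hrk
  refine ⟨fun _ => .refl, fun α β hαβ hβα => ?_, fun _ _ _ => .trans, fun α β => ?_,
    fun α β => ?_⟩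
  · exact AffineVersion.profile_injective hrkn hrkmono
      (((hle _ _).1 hβα).antisymm ((hle _ _).1 hαβ))
  · obtain ⟨m, hm⟩ := hrealize (α.isProfile_profile.sup β.isProfile_profile)
    refine ⟨m, ?_⟩
    simp only [hle, hm]
    exact ⟨le_sup_left, le_sup_right, fun _ => sup_le⟩
  · obtain ⟨j, hj⟩ := hrealize (α.isProfile_profile.inf β.isProfile_profile)
    refine ⟨j, ?_⟩
    simp only [hle, hj]
    exact ⟨inf_le_left, inf_le_right, fun _ => le_inf⟩
end

section
/- If α ≤_M β in M_ℤ, then there exist m ≥ 0 and a sequence β_0 = α, β_1, …, β_m = β such that for each 0 ≤ k ≤ m−1, β_{k+1} is elementarily superior to β_k. -/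
/-- `β` is elementarily superior to `α` in `M_ℤ`: there are representatives
`α = [a, u]`, `β = [a, v]` with the same chain and 1-based indices `i ≤ j` in `[1, n]`
(represented here by `i j : Fin n`) such that `u` is constant on `[i, j]`,
`v = u + 1` on `[i, j]`, and `v = u` outside `[i, j]`. -/
def elemSup {L : Type} [Lattice L] [BoundedOrder L] {n : ℕ}
    (α β : AffineVersion L n ℤ) : Prop :=
  ∃ (p q : AffinePt L n ℤ) (i j : Fin n),
    mkA p = α ∧ mkA q = β ∧ p.c = q.c ∧ i ≤ j ∧
    (∀ k, i ≤ k → k ≤ j → p.u k = p.u j) ∧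
    (∀ k, i ≤ k → k ≤ j → q.u k = p.u j + 1) ∧
    (∀ k, k < i ∨ j < k → q.u k = p.u k)

/-- There is a sequence of `m` elementarily superior steps from `α` to `β`. -/
def chainLen {L : Type} [Lattice L] [BoundedOrder L] {n : ℕ}
    (α β : AffineVersion L n ℤ) (m : ℕ) : Prop :=
  ∃ s : ℕ → AffineVersion L n ℤ, s 0 = α ∧ s m = β ∧
    ∀ k < m, elemSup (s k) (s (k + 1))

section AuxProofs

variable {L : Type} [Lattice L] [BoundedOrder L] {n : ℕ}

lemma AffinePt.ext' {H : Type} [Preorder H] {p q : AffinePt L n H}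
    (h1 : p.c = q.c) (h2 : p.u = q.u) : p = q := by
  cases p; cases q; cases h1; cases h2; rfl

/-- Key lemma: a single coordinatewise comparison decomposes into elementary steps. -/
lemma key_decomp : ∀ (D : ℕ) (p q : AffinePt L n ℤ),
    (∑ k : Fin n, (q.u k - p.u k).toNat) = D → p.c = q.c → (∀ k, p.u k ≤ q.u k) →
    Relation.ReflTransGen elemSup (mkA p) (mkA q) := by
  intro D
  induction D using Nat.strong_induction_on with
  | _ D ih =>
    intro p q hD hc hu
    rcases Nat.eq_zero_or_pos D with hD0 | hDpos
    · -- all differences are zero, so p = q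
      subst hD0
      have hz := Finset.sum_eq_zero_iff.mp hD
      have hpq : p = q := by
        refine AffinePt.ext' hc (funext fun k => ?_)
        have := hz k (Finset.mem_univ k)
        have := hu k
        omega
      rw [hpq]
    · -- there is a coordinate where p.u < q.u
      have hex : ∃ i : Fin n, p.u i < q.u i := by
        by_contra hcon
        push_neg at hcon
        have : (∑ k : Fin n, (q.u k - p.u k).toNat) = 0 :=
          Finset.sum_eq_zero (fun k _ => by have := hcon k; omega)
        omega
      obtain ⟨i, hi⟩ := hex
      -- j : the end of the constant block of p.u containing i
      set P : ℕ → Prop := fun m => ∃ h : m < n, p.u ⟨m, h⟩ = p.u i with hPdef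
      have hPi : P i.1 := ⟨i.isLt, by congr⟩
      have hin1 : i.1 ≤ n - 1 := by have := i.isLt; omega
      have hiJ : i.1 ≤ Nat.findGreatest P (n - 1) := Nat.le_findGreatest hin1 hPi
      have hJP : P (Nat.findGreatest P (n - 1)) := Nat.findGreatest_spec hin1 hPi
      obtain ⟨hJn, hJeq⟩ := hJP
      set J : ℕ := Nat.findGreatest P (n - 1) with hJdef
      set j : Fin n := ⟨J, hJn⟩ with hjdef
      have hij : i ≤ j := hiJ
      have huji : p.u j = p.u i := hJeq
      -- constancy of p.u on [i, j]
      have hconst : ∀ k, i ≤ k → k ≤ j → p.u k = p.u j := by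
        intro k hik hkj
        have h1 : p.u i ≤ p.u k := p.humono hik
        have h2 : p.u k ≤ p.u j := p.humono hkj
        omega
      -- the next element after the block is strictly bigger
      have hnext : ∀ h : J + 1 < n, p.u j + 1 ≤ p.u ⟨J + 1, h⟩ := by
        intro h
        have hnp : ¬ P (J + 1) :=
          Nat.findGreatest_is_greatest (P := P) (n := n - 1) (k := J + 1) (by omega) (by omega)
        have hne : p.u ⟨J + 1, h⟩ ≠ p.u i := fun hh => hnp ⟨h, hh⟩
        have hle : p.u j ≤ p.u ⟨J + 1, h⟩ := p.humono (by simp [hjdef, Fin.le_def])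
        omega
      -- new tuple: increment the block [i, j] by 1
      set u' : Fin n → ℤ := fun k => if i ≤ k ∧ k ≤ j then p.u k + 1 else p.u k with hu'def
      have hu'mono : Monotone u' := by
        intro a b hab
        simp only [hu'def]
        by_cases ha : i ≤ a ∧ a ≤ j <;> by_cases hb : i ≤ b ∧ b ≤ j
        · rw [if_pos ha, if_pos hb]; have := p.humono hab; omega
        · -- a in block, b out: then j < b
          have hjb : j < b := by
            rcases (not_and_or.mp hb) with h | h
            · exact absurd (le_trans ha.1 hab) h
            · exact lt_of_not_ge h
          have hJ1b : J + 1 ≤ b.1 := hjb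
          have hb1 : J + 1 < n := lt_of_le_of_lt hJ1b b.isLt
          have h1 := hnext hb1
          have h2 : p.u ⟨J + 1, hb1⟩ ≤ p.u b := p.humono (by simpa [Fin.le_def] using hJ1b)
          have h3 : p.u a = p.u j := hconst a ha.1 ha.2
          rw [if_pos ha, if_neg hb]; omega
        · rw [if_neg ha, if_pos hb]; have := p.humono hab; omega
        · rw [if_neg ha, if_neg hb]; exact p.humono hab
      set p' : AffinePt L n ℤ := ⟨p.c, p.hc0, p.hcn, p.hcmono, u', hu'mono⟩ with hp'def
      -- elementary step from p to p'
      have hstep : elemSup (mkA p) (mkA p') := by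
        refine ⟨p, p', i, j, rfl, rfl, rfl, hij, hconst, ?_, ?_⟩
        · intro k hik hkj
          show u' k = p.u j + 1
          simp only [hu'def]
          rw [if_pos ⟨hik, hkj⟩, hconst k hik hkj]
        · intro k hk
          show u' k = p.u k
          simp only [hu'def]
          have : ¬ (i ≤ k ∧ k ≤ j) := by
            rcases hk with h | h
            · exact fun hh => absurd hh.1 (not_le.mpr h)
            · exact fun hh => absurd hh.2 (not_le.mpr h)
          rw [if_neg this]
      -- p'.u ≤ q.u
      have hu' : ∀ k, p'.u k ≤ q.u k := by
        intro k
        show u' k ≤ q.u k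
        simp only [hu'def]
        by_cases hk : i ≤ k ∧ k ≤ j
        · rw [if_pos hk]
          have h1 : p.u k = p.u j := hconst k hk.1 hk.2
          have h2 : q.u i ≤ q.u k := q.humono hk.1
          omega
        · rw [if_neg hk]
          exact hu k
      -- the sum strictly decreases
      have hlt : (∑ k : Fin n, (q.u k - p'.u k).toNat) < D := by
        rw [← hD]
        apply Finset.sum_lt_sum
        · intro k _
          show (q.u k - u' k).toNat ≤ (q.u k - p.u k).toNat
          simp only [hu'def]
          by_cases hk : i ≤ k ∧ k ≤ j
          · rw [if_pos hk]; omega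
          · rw [if_neg hk]
        · refine ⟨i, Finset.mem_univ i, ?_⟩
          show (q.u i - u' i).toNat < (q.u i - p.u i).toNat
          simp only [hu'def]
          rw [if_pos ⟨le_refl i, hij⟩]
          omega
      have hrec := ih _ hlt p' q rfl hc hu'
      exact Relation.ReflTransGen.head hstep hrec

lemma stepLe_to_elem {α β : AffineVersion L n ℤ} (h : stepLe α β) :
    Relation.ReflTransGen elemSup α β := by
  obtain ⟨p, q, hp, hq, hc, hu⟩ := h
  rw [← hp, ← hq]
  exact key_decomp _ p q rfl hc hu

end AuxProofs

/-- If `α ≤_M β` in `M_ℤ`, then `β` is reached from `α` by a finite sequence of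
elementarily superior steps. -/
theorem stmt9 (L : Type) [Lattice L] [BoundedOrder L] (n : ℕ)
    (rk : L → ℕ) (hrk0 : rk ⊥ = 0) (hrkn : rk ⊤ = n)
    (hrkmono : StrictMono rk)
    (hrkcov : ∀ x y : L, x ⋖ y → rk y = rk x + 1)
    (α β : AffineVersion L n ℤ) (h : leM α β) :
    ∃ (m : ℕ) (s : ℕ → AffineVersion L n ℤ), s 0 = α ∧ s m = β ∧
      ∀ k < m, elemSup (s k) (s (k + 1)) := by
  have helem : Relation.ReflTransGen elemSup α β := by
    induction h with
    | refl => exact Relation.ReflTransGen.refl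
    | tail _ hbc ih => exact ih.trans (stepLe_to_elem hbc)
  clear h
  induction helem with
  | refl => exact ⟨0, fun _ => α, rfl, rfl, by omega⟩
  | @tail b c _ hbc ih =>
    obtain ⟨m, s, h0, hm, hsteps⟩ := ih
    refine ⟨m + 1, fun k => if k ≤ m then s k else c, by simp [h0], by simp, ?_⟩
    intro k hk
    by_cases hkm : k < m
    · simpa [Nat.le_of_lt hkm, Nat.succ_le_of_lt hkm] using hsteps k hkm
    · have hkeq : k = m := by omega
      subst hkeq
      simpa [hm] using hbc
end

section
/- Assume α, β, γ ∈ M_ℤ satisfy α ≤_M β, α ≤_M γ and D(α,β) = D(α,γ) = 1. Then β and γ have a least upper bound δ in (M_ℤ, ≤_M) with D(β,δ) ≤ 1 and D(γ,δ) ≤ 1. -/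
section AffProof

open Finset

variable {L : Type} [Lattice L] [BoundedOrder L] {n : ℕ}

/-- number of coordinates of `u` that are `≤ ℓ`. -/
def rcount (u : Fin n → ℤ) (ℓ : ℤ) : ℕ :=
  (Finset.univ.filter fun k => u k ≤ ℓ).card

lemma rcount_le (u : Fin n → ℤ) (ℓ : ℤ) : rcount u ℓ ≤ n :=
  (Finset.card_filter_le _ _).trans (by simp)

lemma lt_rcount {u : Fin n → ℤ} (hu : Monotone u) (k : Fin n) (ℓ : ℤ) :
    (k : ℕ) < rcount u ℓ ↔ u k ≤ ℓ := by
  constructor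
  · intro h
    by_contra hc
    push_neg at hc
    have hsub : (Finset.univ.filter fun k' => u k' ≤ ℓ) ⊆ Finset.Iio k := by
      intro k' hk'
      simp only [Finset.mem_filter, Finset.mem_univ, true_and] at hk'
      simp only [Finset.mem_Iio]
      by_contra hge
      push_neg at hge
      exact absurd ((hu hge).trans hk') (not_le.mpr hc)
    have := Finset.card_le_card hsub
    rw [Fin.card_Iio] at this
    unfold rcount at h
    omega
  · intro h
    have hsub : Finset.Iic k ⊆ (Finset.univ.filter fun k' => u k' ≤ ℓ) := by
      intro k' hk'
      simp only [Finset.mem_Iic] at hk'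
      simp only [Finset.mem_filter, Finset.mem_univ, true_and]
      exact (hu hk').trans h
    have := Finset.card_le_card hsub
    rw [Fin.card_Iic] at this
    unfold rcount
    omega

lemma rcount_anti {x y : Fin n → ℤ} (h : ∀ k, x k ≤ y k) (ℓ : ℤ) :
    rcount y ℓ ≤ rcount x ℓ := by
  apply Finset.card_le_card
  intro k hk
  simp only [Finset.mem_filter, Finset.mem_univ, true_and] at *
  exact (h k).trans hk

lemma rcount_mono (u : Fin n → ℤ) {ℓ ℓ' : ℤ} (h : ℓ ≤ ℓ') :
    rcount u ℓ ≤ rcount u ℓ' := by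
  apply Finset.card_le_card
  intro k hk
  simp only [Finset.mem_filter, Finset.mem_univ, true_and] at *
  exact hk.trans h

/-- a natural number `≤ n` is determined by which `k : Fin n` are `<` it. -/
lemma nat_eq_of_lt_iff {a b : ℕ} (ha : a ≤ n) (hb : b ≤ n)
    (h : ∀ k : Fin n, (k : ℕ) < a ↔ (k : ℕ) < b) : a = b := by
  by_contra hne
  rcases Nat.lt_or_ge a b with hlt | hge
  · have h2 := (h ⟨a, lt_of_lt_of_le hlt hb⟩).mpr hlt
    have h3 : ((⟨a, lt_of_lt_of_le hlt hb⟩ : Fin n) : ℕ) = a := rfl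
    rw [h3] at h2
    omega
  · have hlt : b < a := by omega
    have h2 := (h ⟨b, lt_of_lt_of_le hlt ha⟩).mp hlt
    have h3 : ((⟨b, lt_of_lt_of_le hlt ha⟩ : Fin n) : ℕ) = b := rfl
    rw [h3] at h2
    omega

/-- The profile of a point: at level `ℓ`, the chain element of rank `rcount u ℓ`. -/
def phiPt (p : AffinePt L n ℤ) (ℓ : ℤ) : L :=
  p.c ⟨rcount p.u ℓ, Nat.lt_succ_of_le (rcount_le _ _)⟩

lemma phiPt_eq_c (p : AffinePt L n ℤ) (ℓ : ℤ) (r : ℕ) (h : rcount p.u ℓ = r)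
    (hr : r < n + 1) : phiPt p ℓ = p.c ⟨r, hr⟩ := by
  unfold phiPt
  congr 1
  exact Fin.ext h

lemma phiPt_basic {p q : AffinePt L n ℤ} (h : basicRel p q) : phiPt p = phiPt q := by
  obtain ⟨hu, hc⟩ := h
  funext ℓ
  set r := rcount p.u ℓ with hrdef
  have hrn : r ≤ n := rcount_le _ _
  have hrq : rcount q.u ℓ = r := by rw [← hu]
  rw [phiPt_eq_c p ℓ r rfl (by omega), phiPt_eq_c q ℓ r hrq (by omega)]
  by_cases h0 : r = 0
  · have e1 : (⟨r, by omega⟩ : Fin (n+1)) = 0 := Fin.ext (by simp [h0])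
    rw [e1, p.hc0, q.hc0]
  by_cases hn : r = n
  · have e1 : (⟨r, by omega⟩ : Fin (n+1)) = Fin.last n := Fin.ext (by simp [hn, Fin.last])
    rw [e1, p.hcn, q.hcn]
  obtain ⟨j, hj⟩ : ∃ j, r = j + 1 := ⟨r - 1, by omega⟩
  by_contra hne
  have hfree : p.u ⟨j, by omega⟩ = p.u ⟨j + 1, by omega⟩ := by
    apply hc j (by omega)
    intro hcc
    apply hne
    have e2 : (⟨r, by omega⟩ : Fin (n+1)) = ⟨j + 1, by omega⟩ := Fin.ext (by show r = j + 1; omega)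
    rw [e2, hcc]
  have h1 : ((⟨j, by omega⟩ : Fin n) : ℕ) < rcount p.u ℓ := by
    show j < r
    omega
  have h2 : ¬ (((⟨j + 1, by omega⟩ : Fin n) : ℕ) < rcount p.u ℓ) := by
    show ¬ (j + 1 < r)
    omega
  rw [lt_rcount p.humono] at h1
  rw [lt_rcount p.humono] at h2
  rw [hfree] at h1
  exact h2 h1

/-- The profile, descended to the affine version. -/
def Phi : AffineVersion L n ℤ → ℤ → L :=
  Quot.lift phiPt fun _ _ h => phiPt_basic h

@[simp] lemma Phi_mkA (p : AffinePt L n ℤ) : Phi (mkA p) = phiPt p := rfl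

lemma Phi_mono (x : AffineVersion L n ℤ) : Monotone (Phi x) := by
  induction x using Quot.ind with
  | _ p =>
    intro ℓ ℓ' h
    exact p.hcmono.monotone (by simpa using rcount_mono p.u h)

lemma stepLe_phi {x y : AffineVersion L n ℤ} (h : stepLe x y) (ℓ : ℤ) :
    Phi y ℓ ≤ Phi x ℓ := by
  obtain ⟨p, q, hp, hq, hcc, hle⟩ := h
  rw [← hp, ← hq]
  show phiPt q ℓ ≤ phiPt p ℓ
  unfold phiPt
  rw [← hcc]
  exact p.hcmono.monotone (by simpa using rcount_anti hle ℓ)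

lemma leM_phi {x y : AffineVersion L n ℤ} (h : leM x y) (ℓ : ℤ) :
    Phi y ℓ ≤ Phi x ℓ := by
  induction h with
  | refl => exact le_rfl
  | tail _ hstep ih => exact (stepLe_phi hstep ℓ).trans ih

lemma Phi_tails (x : AffineVersion L n ℤ) :
    ∃ lo hi : ℤ, (∀ ℓ < lo, Phi x ℓ = ⊥) ∧ (∀ ℓ, hi ≤ ℓ → Phi x ℓ = ⊤) := by
  induction x using Quot.ind with
  | _ p =>
    have hbot : ∀ ℓ : ℤ, rcount p.u ℓ = 0 → Phi (mkA p) ℓ = ⊥ := by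
      intro ℓ h
      show phiPt p ℓ = ⊥
      rw [phiPt_eq_c p ℓ 0 h (by omega)]
      have e1 : (⟨0, by omega⟩ : Fin (n+1)) = 0 := Fin.ext rfl
      rw [e1, p.hc0]
    have htop : ∀ ℓ : ℤ, rcount p.u ℓ = n → Phi (mkA p) ℓ = ⊤ := by
      intro ℓ h
      show phiPt p ℓ = ⊤
      rw [phiPt_eq_c p ℓ n h (by omega)]
      have e1 : (⟨n, by omega⟩ : Fin (n+1)) = Fin.last n := Fin.ext rfl
      rw [e1, p.hcn]
    rcases Nat.eq_zero_or_pos n with h0 | hpos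
    · refine ⟨0, 0, ?_, ?_⟩ <;> intro ℓ _
      · apply hbot
        have := rcount_le p.u ℓ
        omega
      · apply htop
        have := rcount_le p.u ℓ
        omega
    · have hne : (Finset.univ : Finset (Fin n)).Nonempty := ⟨⟨0, hpos⟩, Finset.mem_univ _⟩
      refine ⟨Finset.univ.inf' hne p.u, Finset.univ.sup' hne p.u + 1, ?_, ?_⟩
      · intro ℓ hℓ
        apply hbot
        unfold rcount
        rw [Finset.card_eq_zero]
        apply Finset.filter_false_of_mem
        intro k _
        have := Finset.inf'_le p.u (Finset.mem_univ k)
        omega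
      · intro ℓ hℓ
        apply htop
        unfold rcount
        rw [Finset.filter_true_of_mem, Finset.card_univ, Fintype.card_fin]
        intro k _
        have := Finset.le_sup' p.u (Finset.mem_univ k)
        omega

section WithRank

variable (rk : L → ℕ) (hrk0 : rk ⊥ = 0) (hrkn : rk ⊤ = n) (hrkmono : StrictMono rk)

include hrkn hrkmono in
lemma rk_le_n (x : L) : rk x ≤ n := by
  rw [← hrkn]
  exact hrkmono.monotone le_top

include hrkn hrkmono in
lemma chain_rk (p : AffinePt L n ℤ) (m : Fin (n+1)) : rk (p.c m) = (m : ℕ) := by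
  have lb : ∀ (m' : ℕ) (hm' : m' < n + 1), m' ≤ rk (p.c ⟨m', hm'⟩) := by
    intro m'
    induction m' with
    | zero => intro _; omega
    | succ m' ih =>
      intro hm'
      have h1 := ih (by omega)
      have h2 : p.c ⟨m', by omega⟩ < p.c ⟨m' + 1, hm'⟩ := by
        apply p.hcmono
        show (⟨m', by omega⟩ : Fin (n+1)) < ⟨m' + 1, hm'⟩
        simp [Fin.lt_def]
      have := hrkmono h2
      omega
  have ub : ∀ (d m' : ℕ) (h : m' + d = n), rk (p.c ⟨m', by omega⟩) + d ≤ n := by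
    intro d
    induction d with
    | zero =>
      intro m' h
      have : (⟨m', by omega⟩ : Fin (n+1)) = Fin.last n := by apply Fin.ext; simp [Fin.last]; omega
      rw [this, p.hcn, hrkn]
      omega
    | succ d ih =>
      intro m' h
      have h1 := ih (m' + 1) (by omega)
      have h2 : p.c ⟨m', by omega⟩ < p.c ⟨m' + 1, by omega⟩ := by
        apply p.hcmono
        simp [Fin.lt_def]
      have := hrkmono h2
      omega
  have h1 := lb m m.isLt
  have h2 := ub (n - m) m (by omega)
  have hm : (⟨(m : ℕ), m.isLt⟩ : Fin (n+1)) = m := by apply Fin.ext; rfl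
  rw [hm] at h1 h2
  omega

include hrkn hrkmono in
lemma rk_phiPt (p : AffinePt L n ℤ) (ℓ : ℤ) : rk (phiPt p ℓ) = rcount p.u ℓ := by
  unfold phiPt
  rw [chain_rk rk hrkn hrkmono]

include hrkn hrkmono in
lemma basic_of_phi_eq {p q : AffinePt L n ℤ} (h : phiPt p = phiPt q) : basicRel p q := by
  have hrc : ∀ ℓ, rcount p.u ℓ = rcount q.u ℓ := by
    intro ℓ
    rw [← rk_phiPt rk hrkn hrkmono p, ← rk_phiPt rk hrkn hrkmono q, h]
  have hu : p.u = q.u := by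
    funext k
    have hiff : ∀ ℓ : ℤ, p.u k ≤ ℓ ↔ q.u k ≤ ℓ := by
      intro ℓ
      rw [← lt_rcount p.humono, ← lt_rcount q.humono, hrc]
    exact le_antisymm ((hiff (q.u k)).mpr le_rfl) ((hiff (p.u k)).mp le_rfl)
  refine ⟨hu, ?_⟩
  intro j hj hne
  by_contra hneu
  have hlt : p.u ⟨j, by omega⟩ < p.u ⟨j + 1, by omega⟩ :=
    lt_of_le_of_ne (p.humono (by simp [Fin.le_def])) hneu
  set ℓ := p.u ⟨j, by omega⟩ with hℓ
  have hiffk : ∀ k : Fin n, (k : ℕ) < rcount p.u ℓ ↔ (k : ℕ) < j + 1 := by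
    intro k
    rw [lt_rcount p.humono]
    constructor
    · intro hk
      by_contra hge
      push_neg at hge
      have : p.u ⟨j + 1, by omega⟩ ≤ p.u k := p.humono (by simp [Fin.le_def]; omega)
      omega
    · intro hk
      exact p.humono (by simp [Fin.le_def]; omega)
  have hrcp : rcount p.u ℓ = j + 1 :=
    nat_eq_of_lt_iff (rcount_le _ _) (by omega) hiffk
  have hrcq : rcount q.u ℓ = j + 1 := by rw [← hrc]; exact hrcp
  apply hne
  have hp : phiPt p ℓ = p.c ⟨j + 1, by omega⟩ := by
    unfold phiPt; congr 1; apply Fin.ext; simp [hrcp]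
  have hq : phiPt q ℓ = q.c ⟨j + 1, by omega⟩ := by
    unfold phiPt; congr 1; apply Fin.ext; simp [hrcq]
  rw [← hp, ← hq, h]

include hrkn hrkmono in
lemma classInj {x y : AffineVersion L n ℤ} (h : Phi x = Phi y) : x = y := by
  induction x using Quot.ind with
  | _ p =>
    induction y using Quot.ind with
    | _ q => exact Quot.sound (basic_of_phi_eq rk hrkn hrkmono h)

variable (hrkcov : ∀ x y : L, x ⋖ y → rk y = rk x + 1)

include hrkmono hrkcov in
lemma cover_ex {x y : L} (h : x < y) : ∃ z, x < z ∧ z ≤ y ∧ rk z = rk x + 1 := by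
  classical
  set A : Set ℕ := rk '' {z | x < z ∧ z ≤ y} with hA
  have hAne : A.Nonempty := ⟨rk y, y, ⟨h, le_rfl⟩, rfl⟩
  obtain ⟨z, ⟨hz1, hz2⟩, hz3⟩ := Nat.sInf_mem hAne
  refine ⟨z, hz1, hz2, ?_⟩
  have hcov : x ⋖ z := by
    refine ⟨hz1, ?_⟩
    intro w hw1 hw2
    have : rk w ∈ A := ⟨w, ⟨hw1, hw2.le.trans hz2⟩, rfl⟩
    have h1 := Nat.sInf_le this
    have h2 := hrkmono hw2
    omega
  exact hrkcov x z hcov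


include hrkmono hrkcov in
lemma mid_ex {x y : L} (hxy : x ≤ y) :
    ∀ m, rk x ≤ m → m ≤ rk y → ∃ z, x ≤ z ∧ z ≤ y ∧ rk z = m := by
  intro m hm1
  induction m, hm1 using Nat.le_induction with
  | base => exact fun _ => ⟨x, le_rfl, hxy, rfl⟩
  | succ m hm ih =>
    intro hle
    obtain ⟨z, hz1, hz2, hz3⟩ := ih (by omega)
    have hzy : z < y := lt_of_le_of_ne hz2 (by rintro rfl; omega)
    obtain ⟨z', h1, h2, h3⟩ := cover_ex rk hrkmono hrkcov hzy
    exact ⟨z', hz1.trans h1.le, h2, by omega⟩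

include hrk0 hrkn hrkmono hrkcov in
lemma chainThrough (S : Set L) (hS : ∀ a ∈ S, ∀ b ∈ S, a ≤ b ∨ b ≤ a)
    (hbot : (⊥ : L) ∈ S) (htop : (⊤ : L) ∈ S) :
    ∃ c : Fin (n+1) → L, c 0 = ⊥ ∧ c (Fin.last n) = ⊤ ∧ StrictMono c ∧
      ∀ s ∈ S, c ⟨rk s, Nat.lt_succ_of_le (rk_le_n rk hrkn hrkmono s)⟩ = s := by
  classical
  let g : ℕ → L := fun m => Nat.rec ⊥
    (fun m gm => @dite L (∃ z, gm ≤ z ∧ rk z = m + 1 ∧ ∀ s ∈ S, m + 1 ≤ rk s → z ≤ s)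
      (Classical.propDecidable _) (fun h => h.choose) (fun _ => gm)) m
  have hg0 : g 0 = ⊥ := rfl
  have hgsucc : ∀ m, g (m+1) =
      @dite L (∃ z, g m ≤ z ∧ rk z = m + 1 ∧ ∀ s ∈ S, m + 1 ≤ rk s → z ≤ s)
      (Classical.propDecidable _) (fun h => h.choose) (fun _ => g m) := fun m => rfl
  have hgmono : ∀ m, g m ≤ g (m+1) := by
    intro m
    rw [hgsucc m]
    rcases Classical.em (∃ z, g m ≤ z ∧ rk z = m + 1 ∧ ∀ s ∈ S, m + 1 ≤ rk s → z ≤ s)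
      with h | h
    · rw [dif_pos h]; exact h.choose_spec.1
    · rw [dif_neg h]
  have inv : ∀ m, m ≤ n → rk (g m) = m ∧ (∀ s ∈ S, rk s ≤ m → s ≤ g m) ∧
      (∀ s ∈ S, m ≤ rk s → g m ≤ s) := by
    intro m
    induction m with
    | zero =>
      intro _
      refine ⟨by rw [hg0, hrk0], ?_, ?_⟩
      · intro s hs hrs
        have : s = ⊥ := by
          by_contra hne
          have : (⊥ : L) < s := lt_of_le_of_ne bot_le (Ne.symm hne)
          have := hrkmono this
          omega
        rw [this, hg0]
      · intro s _ _; rw [hg0]; exact bot_le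
    | succ m ih =>
      intro hm
      obtain ⟨ih1, ih2, ih3⟩ := ih (by omega)
      -- minimal element t0 of S above rank m+1
      set A : Set ℕ := rk '' {s | s ∈ S ∧ m + 1 ≤ rk s} with hA
      have hAne : A.Nonempty := ⟨rk ⊤, ⊤, ⟨htop, by omega⟩, rfl⟩
      obtain ⟨t0, ⟨ht0S, ht0ge⟩, ht0rk⟩ := Nat.sInf_mem hAne
      have ht0min : ∀ s ∈ S, m + 1 ≤ rk s → rk t0 ≤ rk s := by
        intro s hs h
        rw [ht0rk]
        exact Nat.sInf_le ⟨s, ⟨hs, h⟩, rfl⟩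
      have ht0le : ∀ s ∈ S, m + 1 ≤ rk s → t0 ≤ s := by
        intro s hs h
        rcases hS t0 ht0S s hs with h1 | h1
        · exact h1
        · rcases eq_or_lt_of_le h1 with rfl | hlt
          · exact le_rfl
          · have := hrkmono hlt
            have := ht0min s hs h
            omega
      have hgmt0 : g m ≤ t0 := ih3 t0 ht0S (by omega)
      obtain ⟨z, hz1, hz2, hz3⟩ :=
        mid_ex rk hrkmono hrkcov hgmt0 (m+1) (by omega) (by omega)
      have hex : ∃ z, g m ≤ z ∧ rk z = m + 1 ∧ ∀ s ∈ S, m + 1 ≤ rk s → z ≤ s :=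
        ⟨z, hz1, hz3, fun s hs h => hz2.trans (ht0le s hs h)⟩
      have hgs : g (m+1) = hex.choose := by rw [hgsucc m, dif_pos hex]
      obtain ⟨hc1, hc2, hc3⟩ := hex.choose_spec
      refine ⟨by rw [hgs]; exact hc2, ?_, ?_⟩
      · intro s hs hrs
        rcases Nat.lt_or_ge (rk s) (m+1) with h1 | h1
        · exact (ih2 s hs (by omega)).trans (by rw [hgs]; exact hc1)
        · have h2 := hc3 s hs h1
          have : hex.choose = s := by
            rcases eq_or_lt_of_le h2 with h3 | h3
            · exact h3
            · have := hrkmono h3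
              omega
          rw [hgs, this]
      · intro s hs h1
        rw [hgs]
        exact hc3 s hs h1
  have hstrict : ∀ m, m < n → g m < g (m+1) := by
    intro m hm
    have h1 := (inv m (by omega)).1
    have h2 := (inv (m+1) (by omega)).1
    exact lt_of_le_of_ne (hgmono m) (by intro h; rw [h] at h1; omega)
  refine ⟨fun i => g i, ?_, ?_, ?_, ?_⟩
  · exact hg0
  · have h1 := (inv n le_rfl).2.1 ⊤ htop (by omega)
    exact top_le_iff.mp h1
  · rw [Fin.strictMono_iff_lt_succ]
    intro i
    exact hstrict i (by simpa using i.isLt)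
  · intro s hs
    have h1 := (inv (rk s) (rk_le_n rk hrkn hrkmono s)).2.1 s hs le_rfl
    have h2 := (inv (rk s) (rk_le_n rk hrkn hrkmono s)).2.2 s hs le_rfl
    exact le_antisymm h2 h1

include hrk0 hrkn hrkmono in
lemma exists_tuple (F : ℤ → L) (hF : Monotone F) (lo hi : ℤ)
    (hlo : ∀ ℓ < lo, F ℓ = ⊥) (hhi : ∀ ℓ, hi ≤ ℓ → F ℓ = ⊤) :
    ∃ u : Fin n → ℤ, Monotone u ∧ ∀ (k : Fin n) (ℓ : ℤ), u k ≤ ℓ ↔ (k : ℕ) < rk (F ℓ) := by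
  have hex : ∀ k : Fin n, ∃ m : ℤ, ((k : ℕ) < rk (F m)) ∧
      ∀ z : ℤ, (k : ℕ) < rk (F z) → m ≤ z := by
    intro k
    apply Int.exists_least_of_bdd
    · refine ⟨lo, ?_⟩
      intro z hz
      by_contra hc
      push_neg at hc
      rw [hlo z hc, hrk0] at hz
      omega
    · refine ⟨hi, ?_⟩
      rw [hhi hi le_rfl, hrkn]
      exact k.isLt
  choose u hu1 hu2 using hex
  refine ⟨?_, ?_⟩
  · exact u
  refine ⟨?_, ?_⟩
  · intro k k' hk
    apply hu2
    have := hu1 k'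
    have hkk : (k : ℕ) ≤ (k' : ℕ) := hk
    omega
  · intro k ℓ
    constructor
    · intro h
      have h1 := hu1 k
      have h2 := hrkmono.monotone (hF h)
      omega
    · exact hu2 k ℓ

include hrk0 hrkn hrkmono in
lemma rcount_eq_rk (F : ℤ → L) {u : Fin n → ℤ} (hu : Monotone u)
    (hiff : ∀ (k : Fin n) (ℓ : ℤ), u k ≤ ℓ ↔ (k : ℕ) < rk (F ℓ)) (ℓ : ℤ) :
    rcount u ℓ = rk (F ℓ) := by
  apply nat_eq_of_lt_iff (rcount_le _ _) (rk_le_n rk hrkn hrkmono _)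
  intro k
  rw [lt_rcount hu, hiff]

include hrk0 hrkn hrkmono hrkcov in
lemma realizeUpdate (F : ℤ → L) (hF : Monotone F) (lo hi : ℤ)
    (hlo : ∀ ℓ < lo, F ℓ = ⊥) (hhi : ∀ ℓ, hi ≤ ℓ → F ℓ = ⊤)
    (t : ℤ) (e : L) (he1 : F (t - 1) ≤ e) (he2 : e ≤ F t) :
    ∃ p q : AffinePt L n ℤ, p.c = q.c ∧ phiPt p = F ∧
      phiPt q = Function.update F t e ∧ ∀ k, p.u k ≤ q.u k := by
  classical
  set F' := Function.update F t e with hF'def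
  have hF'le : ∀ ℓ, F' ℓ ≤ F ℓ := by
    intro ℓ
    by_cases h : ℓ = t
    · rw [h, hF'def, Function.update_self]; exact he2
    · rw [hF'def, Function.update_of_ne h]
  have hF'val : ∀ ℓ, ℓ ≠ t → F' ℓ = F ℓ := fun ℓ h => by
    rw [hF'def, Function.update_of_ne h]
  have hF'mono : Monotone F' := by
    intro ℓ ℓ' hll
    by_cases h1 : ℓ = t <;> by_cases h2 : ℓ' = t
    · rw [h1, h2]
    · rw [h1] at hll
      rw [h1, hF'def, Function.update_self, Function.update_of_ne h2]
      exact he2.trans (hF hll)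
    · rw [h2] at hll
      rw [h2, hF'def, Function.update_of_ne h1, Function.update_self]
      have hll' : ℓ ≤ t - 1 := by omega
      exact (hF hll').trans he1
    · rw [hF'def, Function.update_of_ne h1, Function.update_of_ne h2]
      exact hF hll
  have hlo' : ∀ ℓ < min lo t, F' ℓ = ⊥ := by
    intro ℓ h
    rw [hF'val ℓ (by omega)]
    exact hlo ℓ (by omega)
  have hhi' : ∀ ℓ, max hi (t+1) ≤ ℓ → F' ℓ = ⊤ := by
    intro ℓ h
    rw [hF'val ℓ (by omega)]
    exact hhi ℓ (by omega)
  set S : Set L := Set.range F ∪ {e} with hS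
  have hSchain : ∀ a ∈ S, ∀ b ∈ S, a ≤ b ∨ b ≤ a := by
    have hcmp : ∀ ℓ, F ℓ ≤ e ∨ e ≤ F ℓ := by
      intro ℓ
      rcases le_or_gt ℓ (t-1) with h | h
      · exact Or.inl ((hF h).trans he1)
      · exact Or.inr (he2.trans (hF (by omega)))
    rintro a (⟨ℓa, rfl⟩ | ha) b (⟨ℓb, rfl⟩ | hb)
    · rcases le_total ℓa ℓb with h | h
      · exact Or.inl (hF h)
      · exact Or.inr (hF h)
    · rw [Set.mem_singleton_iff] at hb; subst hb
      exact hcmp ℓa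
    · rw [Set.mem_singleton_iff] at ha; subst ha
      exact (hcmp ℓb).symm
    · rw [Set.mem_singleton_iff] at ha hb; subst ha; subst hb; exact Or.inl le_rfl
  have hbotS : (⊥ : L) ∈ S := Or.inl ⟨lo - 1, hlo _ (by omega)⟩
  have htopS : (⊤ : L) ∈ S := Or.inl ⟨hi, hhi hi le_rfl⟩
  obtain ⟨c, hc0, hcn, hcmono, hthru⟩ :=
    chainThrough rk hrk0 hrkn hrkmono hrkcov S hSchain hbotS htopS
  obtain ⟨u, humono, huiff⟩ := exists_tuple rk hrk0 hrkn hrkmono F hF lo hi hlo hhi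
  obtain ⟨v, hvmono, hviff⟩ := exists_tuple rk hrk0 hrkn hrkmono F' hF'mono
    (min lo t) (max hi (t+1)) hlo' hhi'
  refine ⟨⟨c, hc0, hcn, hcmono, u, humono⟩, ⟨c, hc0, hcn, hcmono, v, hvmono⟩, rfl, ?_, ?_, ?_⟩
  · funext ℓ
    show c _ = F ℓ
    have h1 : rcount u ℓ = rk (F ℓ) := rcount_eq_rk rk hrk0 hrkn hrkmono F humono huiff ℓ
    have h2 := hthru (F ℓ) (Or.inl ⟨ℓ, rfl⟩)
    rw [← h2]
    congr 1
    exact Fin.ext h1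
  · funext ℓ
    show c _ = F' ℓ
    have h1 : rcount v ℓ = rk (F' ℓ) := rcount_eq_rk rk hrk0 hrkn hrkmono F' hvmono hviff ℓ
    have hmem : F' ℓ ∈ S := by
      by_cases h : ℓ = t
      · subst h; rw [hF'def, Function.update_self]; exact Or.inr rfl
      · rw [hF'val ℓ h]; exact Or.inl ⟨ℓ, rfl⟩
    have h2 := hthru (F' ℓ) hmem
    rw [← h2]
    congr 1
    exact Fin.ext h1
  · intro k
    show u k ≤ v k
    rw [huiff]
    have h1 : (k : ℕ) < rk (F' (v k)) := (hviff k (v k)).mp le_rfl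
    have h2 := hrkmono.monotone (hF'le (v k))
    omega

include hrk0 hrkn hrkmono hrkcov in
lemma realize (F : ℤ → L) (hF : Monotone F) (lo hi : ℤ)
    (hlo : ∀ ℓ < lo, F ℓ = ⊥) (hhi : ∀ ℓ, hi ≤ ℓ → F ℓ = ⊤) :
    ∃ p : AffinePt L n ℤ, phiPt p = F := by
  obtain ⟨p, q, _, hp, _, _⟩ :=
    realizeUpdate rk hrk0 hrkn hrkmono hrkcov F hF lo hi hlo hhi lo (F lo)
      (hF (by omega)) le_rfl
  exact ⟨p, hp⟩

include hrk0 hrkn hrkmono hrkcov in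
lemma exists_elemSup_update (x : AffineVersion L n ℤ) (t : ℤ) (e : L)
    (he1 : Phi x (t - 1) ≤ e) (he2 : e < Phi x t) :
    ∃ y : AffineVersion L n ℤ, elemSup x y ∧ Phi y = Function.update (Phi x) t e := by
  classical
  obtain ⟨lo, hi, hlo, hhi⟩ := Phi_tails x
  set F := Phi x with hFdef
  obtain ⟨p, q, hpq, hp, hq, hle⟩ :=
    realizeUpdate rk hrk0 hrkn hrkmono hrkcov F (Phi_mono x) lo hi hlo hhi t e he1 he2.le
  have hpx : mkA p = x := by
    apply classInj rk hrkn hrkmono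
    rw [Phi_mkA, hp]
  set F' := Function.update F t e with hF'def
  have huiff : ∀ (k : Fin n) (ℓ : ℤ), p.u k ≤ ℓ ↔ (k : ℕ) < rk (F ℓ) := by
    intro k ℓ
    rw [← hp, rk_phiPt rk hrkn hrkmono p ℓ]
    exact (lt_rcount p.humono k ℓ).symm
  have hviff : ∀ (k : Fin n) (ℓ : ℤ), q.u k ≤ ℓ ↔ (k : ℕ) < rk (F' ℓ) := by
    intro k ℓ
    rw [← hq, rk_phiPt rk hrkn hrkmono q ℓ]
    exact (lt_rcount q.humono k ℓ).symm
  have hrkeF : rk e < rk (F t) := hrkmono he2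
  have hrkFn : rk (F t) ≤ n := rk_le_n rk hrkn hrkmono _
  have hrkF't : rk (F' t) = rk e := by rw [hF'def, Function.update_self]
  have hrkF'no : ∀ ℓ, ℓ ≠ t → rk (F' ℓ) = rk (F ℓ) := by
    intro ℓ h; rw [hF'def, Function.update_of_ne h]
  have hrkFt1 : rk (F (t - 1)) ≤ rk e := hrkmono.monotone he1
  -- indices
  set i : Fin n := ⟨rk e, by omega⟩ with hidef
  set j : Fin n := ⟨rk (F t) - 1, by omega⟩ with hjdef
  -- u is t on [i, j]
  have hu_t : ∀ k : Fin n, rk e ≤ (k : ℕ) → (k : ℕ) ≤ rk (F t) - 1 → p.u k = t := by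
    intro k h1 h2
    have ha : p.u k ≤ t := (huiff k t).mpr (by omega)
    have hb : ¬ p.u k ≤ t - 1 := by
      rw [huiff k (t-1)]
      omega
    omega
  have hv_t1 : ∀ k : Fin n, rk e ≤ (k : ℕ) → (k : ℕ) ≤ rk (F t) - 1 → q.u k = t + 1 := by
    intro k h1 h2
    have ha : q.u k ≤ t + 1 := by
      rw [hviff k (t+1), hrkF'no (t+1) (by omega)]
      have : F t ≤ F (t + 1) := Phi_mono x (by omega)
      have := hrkmono.monotone this
      omega
    have hb : ¬ q.u k ≤ t := by
      rw [hviff k t, hrkF't]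
      omega
    omega
  refine ⟨mkA q, ⟨p, q, i, j, hpx, rfl, hpq, ?_, ?_, ?_, ?_⟩, ?_⟩
  · show i ≤ j
    simp [hidef, hjdef, Fin.le_def]
    omega
  · intro k hik hkj
    rw [hu_t k hik hkj, hu_t j (by simp [hidef, hjdef]; omega) (by simp [hjdef])]
  · intro k hik hkj
    rw [hv_t1 k hik hkj, hu_t j (by simp [hidef, hjdef]; omega) (by simp [hjdef])]
  · intro k hk
    have hequiv : ∀ ℓ : ℤ, ((k : ℕ) < rk (F' ℓ)) ↔ ((k : ℕ) < rk (F ℓ)) := by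
      intro ℓ
      by_cases h : ℓ = t
      · rw [h]
        rcases hk with hk | hk
        · have hk' : (k : ℕ) < rk e := hk
          constructor <;> intro <;> omega
        · have hk' : rk (F t) - 1 < (k : ℕ) := hk
          rw [hrkF't]
          constructor <;> intro <;> omega
      · rw [hrkF'no ℓ h]
    have h1 : q.u k ≤ p.u k := by
      rw [hviff, hequiv, ← huiff]
    have h2 : p.u k ≤ q.u k := by
      rw [huiff, ← hequiv, ← hviff]
    omega
  · rw [Phi_mkA, hq]

end WithRank

lemma elemSup_u_le {p q : AffinePt L n ℤ} {i j : Fin n}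
    (hij : i ≤ j) (h1 : ∀ k, i ≤ k → k ≤ j → p.u k = p.u j)
    (h2 : ∀ k, i ≤ k → k ≤ j → q.u k = p.u j + 1)
    (h3 : ∀ k, k < i ∨ j < k → q.u k = p.u k) :
    ∀ k, p.u k ≤ q.u k := by
  intro k
  by_cases hik : i ≤ k
  · by_cases hkj : k ≤ j
    · rw [h1 k hik hkj, h2 k hik hkj]; omega
    · rw [h3 k (Or.inr (lt_of_not_ge hkj))]
  · rw [h3 k (Or.inl (lt_of_not_ge hik))]

lemma elemSup_stepLe {x y : AffineVersion L n ℤ} (h : elemSup x y) : stepLe x y := by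
  obtain ⟨p, q, i, j, hpx, hqy, hpq, hij, h1, h2, h3⟩ := h
  exact ⟨p, q, hpx, hqy, hpq, elemSup_u_le hij h1 h2 h3⟩

lemma elemSup_phi {x y : AffineVersion L n ℤ} (h : elemSup x y) :
    ∃ t : ℤ, (∀ ℓ, ℓ ≠ t → Phi y ℓ = Phi x ℓ) ∧ (∀ ℓ, Phi y ℓ ≤ Phi x ℓ) := by
  obtain ⟨p, q, i, j, hpx, hqy, hpq, hij, h1, h2, h3⟩ := h
  refine ⟨p.u j, ?_, ?_⟩
  · intro ℓ hℓ
    rw [← hpx, ← hqy, Phi_mkA, Phi_mkA]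
    unfold phiPt
    rw [← hpq]
    have hrc : rcount q.u ℓ = rcount p.u ℓ := by
      unfold rcount
      congr 1
      apply Finset.filter_congr
      intro k _
      by_cases hik : i ≤ k
      · by_cases hkj : k ≤ j
        · rw [h1 k hik hkj, h2 k hik hkj]
          constructor <;> intro <;> omega
        · rw [h3 k (Or.inr (lt_of_not_ge hkj))]
      · rw [h3 k (Or.inl (lt_of_not_ge hik))]
    congr 1
    exact Fin.ext hrc
  · intro ℓ
    rw [← hpx, ← hqy, Phi_mkA, Phi_mkA]
    unfold phiPt
    rw [← hpq]
    exact p.hcmono.monotone (by simpa using rcount_anti (elemSup_u_le hij h1 h2 h3) ℓ)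

lemma chainLen_refl (x : AffineVersion L n ℤ) : chainLen x x 0 :=
  ⟨fun _ => x, rfl, rfl, fun k hk => absurd hk (by omega)⟩

lemma chainLen_one {x y : AffineVersion L n ℤ} (h : elemSup x y) : chainLen x y 1 := by
  refine ⟨fun m => if m = 0 then x else y, by simp, by simp, ?_⟩
  intro k hk
  have : k = 0 := by omega
  subst this
  simpa using h

lemma leM_of_phi_window (rk : L → ℕ) (hrk0 : rk ⊥ = 0) (hrkn : rk ⊤ = n)
    (hrkmono : StrictMono rk) (hrkcov : ∀ x y : L, x ⋖ y → rk y = rk x + 1) :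
    ∀ (h : ℕ) (lo : ℤ) (x y : AffineVersion L n ℤ),
      (∀ ℓ, Phi y ℓ ≤ Phi x ℓ) → (∀ ℓ, ℓ < lo → Phi x ℓ = Phi y ℓ) →
      (∀ ℓ, lo + (h : ℤ) ≤ ℓ → Phi x ℓ = Phi y ℓ) → leM x y := by
  intro h
  induction h with
  | zero =>
    intro lo x y _ hbelow habove
    have : x = y := by
      apply classInj rk hrkn hrkmono
      funext ℓ
      rcases lt_or_ge ℓ lo with h | h
      · exact hbelow ℓ h
      · exact habove ℓ (by omega)
    rw [this]
    exact Relation.ReflTransGen.refl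
  | succ h ih =>
    intro lo x y hle hbelow habove
    obtain ⟨lo', hi', hlo', hhi'⟩ := Phi_tails x
    have he1 : Phi x (lo - 1) ≤ Phi y lo := by
      rw [hbelow (lo - 1) (by omega)]
      exact Phi_mono y (by omega)
    obtain ⟨p, q, hpq, hp, hq, hule⟩ :=
      realizeUpdate rk hrk0 hrkn hrkmono hrkcov (Phi x) (Phi_mono x) lo' hi' hlo' hhi'
        lo (Phi y lo) he1 (hle lo)
    have hpx : mkA p = x := by
      apply classInj rk hrkn hrkmono
      rw [Phi_mkA, hp]
    have hstep : stepLe x (mkA q) := ⟨p, q, hpx, rfl, hpq, hule⟩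
    have hq' : Phi (mkA q) = Function.update (Phi x) lo (Phi y lo) := by
      rw [Phi_mkA, hq]
    have htail : leM (mkA q) y := by
      apply ih (lo + 1)
      · intro ℓ
        rw [hq']
        by_cases hℓ : ℓ = lo
        · subst hℓ; rw [Function.update_self]
        · rw [Function.update_of_ne hℓ]; exact hle ℓ
      · intro ℓ hℓ
        rw [hq']
        by_cases hℓ' : ℓ = lo
        · subst hℓ'; rw [Function.update_self]
        · rw [Function.update_of_ne hℓ']
          exact hbelow ℓ (by omega)
      · intro ℓ hℓ
        rw [hq', Function.update_of_ne (by omega : ℓ ≠ lo)]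
        exact habove ℓ (by push_cast; push_cast at hℓ; omega)
    exact Relation.ReflTransGen.head hstep htail

end AffProof

/-- If `α ≤_M β`, `α ≤_M γ` and `D(α,β) = D(α,γ) = 1`, then `β, γ` have a least
upper bound `δ` in `(M_ℤ, ≤_M)` with `D(β,δ) ≤ 1` and `D(γ,δ) ≤ 1`. -/
theorem stmt11 (L : Type) [Lattice L] [BoundedOrder L] (n : ℕ)
    (rk : L → ℕ) (hrk0 : rk ⊥ = 0) (hrkn : rk ⊤ = n)
    (hrkmono : StrictMono rk)
    (hrkcov : ∀ x y : L, x ⋖ y → rk y = rk x + 1)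
    (α β γ : AffineVersion L n ℤ)
    (hαβ : leM α β) (hαγ : leM α γ)
    (hDβ : IsLeast {m : ℕ | chainLen α β m} 1)
    (hDγ : IsLeast {m : ℕ | chainLen α γ m} 1) :
    ∃ δ : AffineVersion L n ℤ,
      leM β δ ∧ leM γ δ ∧ (∀ θ, leM β θ → leM γ θ → leM δ θ) ∧
      (∃ k ≤ 1, chainLen β δ k) ∧ (∃ k ≤ 1, chainLen γ δ k) := by
  classical
  obtain ⟨sb, hsb0, hsb1, hsbe⟩ := hDβ.1
  have esβ : elemSup α β := by rw [← hsb0, ← hsb1]; exact hsbe 0 (by omega)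
  obtain ⟨sg, hsg0, hsg1, hsge⟩ := hDγ.1
  have esγ : elemSup α γ := by rw [← hsg0, ← hsg1]; exact hsge 0 (by omega)
  obtain ⟨t, hβt, hβle⟩ := elemSup_phi esβ
  obtain ⟨t', hγt, hγle⟩ := elemSup_phi esγ
  set Fδ : ℤ → L := fun ℓ => Phi β ℓ ⊓ Phi γ ℓ with hFδ
  have hδβ : ∀ ℓ, ℓ ≠ t' → Fδ ℓ = Phi β ℓ := by
    intro ℓ h
    apply inf_eq_left.mpr
    rw [hγt ℓ h]
    exact hβle ℓ
  have hδγ : ∀ ℓ, ℓ ≠ t → Fδ ℓ = Phi γ ℓ := by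
    intro ℓ h
    apply inf_eq_right.mpr
    rw [hβt ℓ h]
    exact hγle ℓ
  have hFδmono : Monotone Fδ := fun _ _ h => inf_le_inf (Phi_mono β h) (Phi_mono γ h)
  obtain ⟨loβ, hiβ, hloβ, hhiβ⟩ := Phi_tails β
  obtain ⟨loγ, hiγ, hloγ, hhiγ⟩ := Phi_tails γ
  have hloδ : ∀ ℓ < loβ, Fδ ℓ = ⊥ := by
    intro ℓ h
    apply le_bot_iff.mp
    calc Fδ ℓ ≤ Phi β ℓ := inf_le_left
    _ = ⊥ := hloβ ℓ h
  have hhiδ : ∀ ℓ, max hiβ hiγ ≤ ℓ → Fδ ℓ = ⊤ := by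
    intro ℓ h
    apply top_le_iff.mp
    apply le_inf
    · rw [hhiβ ℓ (by omega)]
    · rw [hhiγ ℓ (by omega)]
  obtain ⟨pδ, hpδ⟩ := realize rk hrk0 hrkn hrkmono hrkcov Fδ hFδmono loβ (max hiβ hiγ) hloδ hhiδ
  set δ := mkA pδ with hδdef
  have hPhiδ : Phi δ = Fδ := hpδ
  have side : ∀ (x : AffineVersion L n ℤ) (tx : ℤ),
      (∀ ℓ, ℓ ≠ tx → Fδ ℓ = Phi x ℓ) → Fδ tx ≤ Phi x tx →
      leM x δ ∧ ∃ k ≤ 1, chainLen x δ k := by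
    intro x tx hagree hlex
    by_cases heq : Fδ tx = Phi x tx
    · have hFeq : Phi δ = Phi x := by
        rw [hPhiδ]
        funext ℓ
        by_cases h : ℓ = tx
        · rw [h]; exact heq
        · exact hagree ℓ h
      have hxδ : δ = x := classInj rk hrkn hrkmono hFeq
      rw [hxδ]
      exact ⟨Relation.ReflTransGen.refl, 0, by omega, chainLen_refl x⟩
    · have hlt : Fδ tx < Phi x tx := lt_of_le_of_ne hlex heq
      have he1 : Phi x (tx - 1) ≤ Fδ tx := by
        rw [← hagree (tx - 1) (by omega)]
        exact hFδmono (by omega)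
      obtain ⟨y, hy, hyPhi⟩ :=
        exists_elemSup_update rk hrk0 hrkn hrkmono hrkcov x tx (Fδ tx) he1 hlt
      have hyδ : y = δ := by
        apply classInj rk hrkn hrkmono
        rw [hyPhi, hPhiδ]
        funext ℓ
        by_cases h : ℓ = tx
        · rw [h, Function.update_self]
        · rw [Function.update_of_ne h]
          exact (hagree ℓ h).symm
      rw [← hyδ]
      exact ⟨Relation.ReflTransGen.single (elemSup_stepLe hy), 1, le_rfl, chainLen_one hy⟩
  obtain ⟨hβδ, hkβ⟩ := side β t' hδβ inf_le_left
  obtain ⟨hγδ, hkγ⟩ := side γ t hδγ inf_le_right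
  refine ⟨δ, hβδ, hγδ, ?_, hkβ, hkγ⟩
  intro θ h1 h2
  have hθle : ∀ ℓ, Phi θ ℓ ≤ Phi δ ℓ := by
    intro ℓ
    rw [hPhiδ]
    exact le_inf (leM_phi h1 ℓ) (leM_phi h2 ℓ)
  obtain ⟨loδ, hiδ, hloδ2, hhiδ2⟩ := Phi_tails δ
  obtain ⟨loθ, hiθ, hloθ, hhiθ⟩ := Phi_tails θ
  apply leM_of_phi_window rk hrk0 hrkn hrkmono hrkcov ((hiθ - loδ).toNat) loδ δ θ hθle
  · intro ℓ h
    rw [hloδ2 ℓ h]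
    have : Phi θ ℓ = ⊥ := by
      apply le_bot_iff.mp
      rw [← hloδ2 ℓ h]
      exact hθle ℓ
    rw [this]
  · intro ℓ h
    have hℓ : hiθ ≤ ℓ := by omega
    rw [hhiθ ℓ hℓ]
    apply top_le_iff.mp
    rw [← hhiθ ℓ hℓ]
    exact hθle ℓ
end

section
/- For all α, β ∈ M_ℝ there exists t > 0 such that (−t)·α ≤_M β ≤_M t·α, where t·[c,u] = [c,(u_1+t,…,u_n+t)] denotes the translation action of ℝ on M_ℝ. -/
/-- Translation of a point of the affine version over `ℝ` by `t`. -/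
def translatePt {L : Type} [Lattice L] [BoundedOrder L] {n : ℕ} (t : ℝ)
    (p : AffinePt L n ℝ) : AffinePt L n ℝ where
  c := p.c
  hc0 := p.hc0
  hcn := p.hcn
  hcmono := p.hcmono
  u := fun k => p.u k + t
  humono := fun _ _ h => add_le_add_left (p.humono h) t

/-- The translation action of `ℝ` on `M_ℝ`: `t · [c, u] = [c, (u₁ + t, …, uₙ + t)]`. -/
def translateAff {L : Type} [Lattice L] [BoundedOrder L] {n : ℕ} (t : ℝ) :
    AffineVersion L n ℝ → AffineVersion L n ℝ :=
  Quot.map (translatePt t) (by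
    intro p q hpq
    obtain ⟨hu, hc⟩ := hpq
    constructor
    · funext k
      show p.u k + t = q.u k + t
      rw [hu]
    · intro j hj hne
      exact congrArg (fun z => z + t) (hc j hj hne))


/-!
Replacing the tuple of a point by a constant tuple `(v, …, v)` gives a class independent of the
chain, since every consecutive pair of coordinates is equal. So any two points `[c, x]`, `[c', y]`
with `x ≤ v ≤ y` are comparable through `[c, v] = [c', v]`, and translating by a large enough `t`
brings every coordinate of `α` below, resp. above, all coordinates of `β`.
-/

namespace AffinePt

variable {L : Type} [Lattice L] [BoundedOrder L] {n : ℕ} {H : Type} [Preorder H]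

def withConst (p : AffinePt L n H) (v : H) : AffinePt L n H :=
  { p with u := fun _ => v, humono := monotone_const }

lemma mkA_withConst_eq (p q : AffinePt L n H) (v : H) :
    mkA (p.withConst v) = mkA (q.withConst v) :=
  Quot.sound ⟨rfl, fun _ _ _ => rfl⟩

lemma exists_abs_le (p : AffinePt L n ℝ) : ∃ B, 0 ≤ B ∧ ∀ k, |p.u k| ≤ B := by
  obtain ⟨B, hB⟩ := Finite.exists_le fun k => |p.u k|
  exact ⟨max B 0, le_max_right _ _, fun k => (hB k).trans (le_max_left _ _)⟩

end AffinePt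

lemma stepLe_mkA_of_le {L : Type} [Lattice L] [BoundedOrder L] {n : ℕ} {H : Type} [Preorder H]
    {p q : AffinePt L n H} (hc : p.c = q.c) (hu : ∀ k, p.u k ≤ q.u k) :
    stepLe (mkA p) (mkA q) :=
  ⟨p, q, rfl, rfl, hc, hu⟩

lemma leM_mkA_of_le_of_le {L : Type} [Lattice L] [BoundedOrder L] {n : ℕ} {H : Type}
    [Preorder H] {p q : AffinePt L n H} (v : H) (hp : ∀ k, p.u k ≤ v) (hq : ∀ k, v ≤ q.u k) :
    leM (mkA p) (mkA q) := by
  have hpv : stepLe (mkA p) (mkA (p.withConst v)) := stepLe_mkA_of_le rfl hp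
  have hvq : stepLe (mkA (q.withConst v)) (mkA q) := stepLe_mkA_of_le rfl hq
  rw [p.mkA_withConst_eq q v] at hpv
  exact .tail (.single hpv) hvq

theorem stmt13_general (L : Type) [Lattice L] [BoundedOrder L] (n : ℕ)
    (α β : AffineVersion L n ℝ) :
    ∃ t : ℝ, 0 < t ∧ leM (translateAff (-t) α) β ∧ leM β (translateAff t α) := by
  obtain ⟨p, rfl⟩ := Quot.exists_rep α
  obtain ⟨q, rfl⟩ := Quot.exists_rep β
  obtain ⟨a, ha, hpa⟩ := p.exists_abs_le
  obtain ⟨b, hb, hqb⟩ := q.exists_abs_le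
  have hp k := abs_le.mp (hpa k)
  have hq k := abs_le.mp (hqb k)
  refine ⟨a + b + 1, by positivity, ?_, ?_⟩
  · refine leM_mkA_of_le_of_le (p := translatePt _ p) (-b) (fun k => ?_) (fun k => (hq k).1)
    change p.u k + -(a + b + 1) ≤ -b
    linarith [(hp k).2]
  · refine leM_mkA_of_le_of_le (q := translatePt _ p) b (fun k => (hq k).2) (fun k => ?_)
    change b ≤ p.u k + (a + b + 1)
    linarith [(hp k).1]

/-- The translation action of `ℝ` on `M_ℝ` is cofinal: for all `α, β ∈ M_ℝ` there is
`t > 0` with `(-t)·α ≤_M β ≤_M t·α`. -/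
theorem stmt13 (L : Type) [Lattice L] [BoundedOrder L] (n : ℕ)
    (rk : L → ℕ) (hrk0 : rk ⊥ = 0) (hrkn : rk ⊤ = n)
    (hrkmono : StrictMono rk)
    (hrkcov : ∀ x y : L, x ⋖ y → rk y = rk x + 1)
    (α β : AffineVersion L n ℝ) :
    ∃ t : ℝ, 0 < t ∧ leM (translateAff (-t) α) β ∧ leM β (translateAff t α) :=
  stmt13_general L n α β
end

section
/- The poset (M_ℝ, ≤_M) is a lattice in which every subset bounded above has a least upper bound, and the function d(α,β) = inf{t ≥ 0 : (−t)·α ≤_M β ≤_M t·α} (where t·[c,u] = [c,(u_1+t,…,u_n+t)]) is a metric on M_ℝ for which (M_ℝ, d) is an injective metric space. -/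
/-!
Send a point `[c, u]` of `M_ℝ` to the step function `Φ [c, u] : s ↦ c_{#{i | u_i ≤ s}}`
(`AffineVersion.flagFun`). The functions obtained are exactly the monotone, right-continuous
functions `ℝ → L` that are `⊥` near `-∞` and `⊤` near `+∞` ("flag functions"): their values lie
on a chain, which extends to a maximal chain, and `u` is recovered from the jump times. Counting
ranks shows that `Φ` is injective, and it reverses the order: `α ≤_M β` iff `Φ β ≤ Φ α`
pointwise. For the nontrivial direction one moves from `Φ α` to `Φ β` one jump of `Φ β` at a
time; each intermediate comparison takes place inside a single maximal chain.

Translation by `t` becomes the shift by `t`, so `d α β ≤ r` iff `Φ α` and `Φ β` are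
`r`-interleaved, and the metric axioms follow. As `L` has finite height, pointwise infima of
flag functions are flag functions, and a pointwise supremum becomes one after right-continuous
regularization. This gives meets, joins and least upper bounds, and also a common point of
balls `B(xᵢ, rᵢ)` with `d(xᵢ, xⱼ) ≤ rᵢ + rⱼ`: the regularization of `s ↦ ⨆ᵢ Φ xᵢ (s - rᵢ)`.
-/

open Filter Topology Set

section OrderTheory

variable {α : Type*}

theorem exists_isGLB_of_wellFoundedLT [SemilatticeInf α] [WellFoundedLT α] {S : Set α}
    (hS : S.Nonempty) : ∃ m, IsGLB S m := by
  -- a minimal element of the `⊓`-closed set `upperBounds (lowerBounds S) ⊇ S`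
  obtain ⟨m, hm, hmin⟩ := wellFounded_lt.has_min (upperBounds (lowerBounds S))
    (hS.mono fun s hs _ hl => hl hs)
  refine ⟨m, fun s hs => ?_, hm⟩
  have hms : m ⊓ s ∈ upperBounds (lowerBounds S) := fun l hl => le_inf (hm hl) (hl hs)
  exact inf_eq_left.1 (eq_of_le_of_not_lt inf_le_left (hmin _ hms))

theorem exists_isLUB_of_wellFoundedGT [SemilatticeSup α] [WellFoundedGT α] {S : Set α}
    (hS : S.Nonempty) : ∃ m, IsLUB S m :=
  exists_isGLB_of_wellFoundedLT (α := αᵒᵈ) hS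

theorem Pi.exists_isGLB_of_wellFoundedLT {ι : Type*} [SemilatticeInf α] [WellFoundedLT α]
    {S : Set (ι → α)} (hS : S.Nonempty) : ∃ G, IsGLB S G := by
  choose G hG using fun i => _root_.exists_isGLB_of_wellFoundedLT (hS.image (Function.eval i))
  exact ⟨G, isGLB_pi.2 hG⟩

theorem Pi.exists_isLUB_of_wellFoundedGT {ι : Type*} [SemilatticeSup α] [WellFoundedGT α]
    {S : Set (ι → α)} (hS : S.Nonempty) : ∃ G, IsLUB S G := by
  choose G hG using fun i => _root_.exists_isLUB_of_wellFoundedGT (hS.image (Function.eval i))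
  exact ⟨G, isLUB_pi.2 hG⟩

theorem Monotone.exists_eqOn_Ioc {β : Type*} [LinearOrder β] [NoMaxOrder β] [PartialOrder α]
    [WellFoundedLT α] {W : β → α} (hW : Monotone W) (s : β) :
    ∃ t, s < t ∧ ∀ x ∈ Ioc s t, W x = W t := by
  obtain ⟨_, ⟨t, hst, rfl⟩, hmin⟩ :=
    wellFounded_lt.has_min (W '' Ioi s) (nonempty_Ioi.image W)
  exact ⟨t, hst, fun x hx => eq_of_le_of_not_lt (hW hx.2) (hmin _ ⟨x, hx.1, rfl⟩)⟩

theorem csInf_setOf_le_iff [ConditionallyCompleteLinearOrder α] {P : α → Prop}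
    (hP : Monotone P) (hclosed : ∀ t, (∀ t' > t, P t') → P t) (hne : ∃ t, P t)
    (hbdd : BddBelow {t | P t}) {r : α} : sInf {t | P t} ≤ r ↔ P r := by
  refine ⟨fun h => hclosed r fun t' ht' => ?_, fun h => csInf_le hbdd h⟩
  obtain ⟨x, hx, hxt⟩ := (csInf_lt_iff hbdd hne).1 (h.trans_lt ht')
  exact hP hxt.le hx

theorem Filter.Eventually.exists_gt_of_nhdsGE {p : ℝ → Prop} {s : ℝ}
    (h : ∀ᶠ x in 𝓝[≥] s, p x) : ∃ x, s < x ∧ p x :=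
  ((h.filter_mono (nhdsWithin_mono s Ioi_subset_Ici_self)).and self_mem_nhdsWithin).exists.imp
    fun _ hx => ⟨hx.2, hx.1⟩

end OrderTheory

section GradedOrder

variable {α : Type*} [PartialOrder α]

instance GradeOrder.wellFoundedGT_of_orderTop [OrderTop α] [GradeOrder ℕ α] :
    WellFoundedGT α :=
  StrictAnti.wellFoundedGT (f := fun a => grade ℕ (⊤ : α) - grade ℕ a) fun a b hab => by
    have hab' : grade ℕ a < grade ℕ b := grade_strictMono hab
    have hb : grade ℕ b ≤ grade ℕ (⊤ : α) := grade_mono le_top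
    show grade ℕ ⊤ - grade ℕ b < grade ℕ ⊤ - grade ℕ a
    omega

theorem IsChain.le_of_grade_le [GradeOrder ℕ α] {V : Set α} (hV : IsChain (· ≤ ·) V)
    {x y : α} (hx : x ∈ V) (hy : y ∈ V) (h : grade ℕ x ≤ grade ℕ y) : x ≤ y :=
  (hV.total hx hy).elim id fun hyx =>
    (eq_or_lt_of_le hyx).elim ge_of_eq fun hlt => absurd (grade_strictMono hlt) h.not_gt

theorem StrictMono.grade_apply [OrderTop α] [GradeOrder ℕ α] {n : ℕ} {c : Fin (n + 1) → α}
    (hc : StrictMono c) (htop : grade ℕ (⊤ : α) = n) (k : Fin (n + 1)) :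
    grade ℕ (c k) = k := by
  -- a strictly monotone self-map of `Fin (n + 1)` is the identity
  let f : Fin (n + 1) → Fin (n + 1) := fun k =>
    ⟨grade ℕ (c k), by have := grade_mono (𝕆 := ℕ) (le_top : c k ≤ ⊤); omega⟩
  have hf : StrictMono f := fun i j hij => Fin.mk_lt_mk.2 (grade_strictMono (hc hij))
  exact congrArg Fin.val (le_antisymm hf.apply_le hf.le_apply)

variable [BoundedOrder α] [GradeMinOrder ℕ α]

theorem Flag.exists_grade_eq (s : Flag α) {k : ℕ} (hk : k ≤ grade ℕ (⊤ : α)) :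
    ∃ x ∈ s, grade ℕ x = k := by
  induction k with
  | zero => exact ⟨⊥, s.bot_mem, grade_bot⟩
  | succ k ih =>
    obtain ⟨x, hxs, rfl⟩ := ih (by omega)
    have hlt : (⟨x, hxs⟩ : s) < ⊤ :=
      lt_top_iff_ne_top.2 fun h => by simp [show x = ⊤ from congrArg Subtype.val h] at hk
    obtain ⟨y, hxy, -⟩ := exists_covBy_le_of_lt hlt
    exact ⟨y, y.2, (Nat.covBy_iff_add_one_eq.1 ((Flag.coe_covBy_coe.2 hxy).grade ℕ)).symm⟩

theorem IsChain.exists_strictMono_fin {V : Set α} (hV : IsChain (· ≤ ·) V) {n : ℕ}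
    (htop : grade ℕ (⊤ : α) = n) :
    ∃ c : Fin (n + 1) → α,
      StrictMono c ∧ c 0 = ⊥ ∧ c (Fin.last n) = ⊤ ∧ V ⊆ range c := by
  obtain ⟨s, hVs⟩ := hV.exists_subset_flag
  choose c hcs hcg using fun k : Fin (n + 1) => s.exists_grade_eq (k := k) (by omega)
  have heq {x y : α} (hx : x ∈ s) (hy : y ∈ s) (h : grade ℕ x = grade ℕ y) : x = y :=
    le_antisymm (s.chain_le.le_of_grade_le hx hy h.le) (s.chain_le.le_of_grade_le hy hx h.ge)
  refine ⟨c, fun i j hij => ?_, heq (hcs 0) s.bot_mem (by simp [hcg, grade_bot]),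
    heq (hcs _) s.top_mem (by simp [hcg, htop]), fun v hv => ?_⟩
  · refine (s.chain_le.le_of_grade_le (hcs i) (hcs j) (by simp [hcg, hij.le])).lt_of_ne ?_
    exact fun h => hij.ne (Fin.ext (by simpa [hcg] using congrArg (grade ℕ) h))
  · have hvn : grade ℕ v < n + 1 := by
      have := grade_mono (𝕆 := ℕ) (le_top : v ≤ ⊤); omega
    exact ⟨⟨grade ℕ v, hvn⟩, heq (hcs _) (hVs hv) (hcg _)⟩

end GradedOrder

section Counting

variable {H : Type*} [LinearOrder H] {n : ℕ}

def numLE (u : Fin n → H) (s : H) : ℕ := (Finset.univ.filter fun i => u i ≤ s).card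

theorem numLE_le (u : Fin n → H) (s : H) : numLE u s ≤ n :=
  (Finset.card_filter_le _ _).trans_eq (Finset.card_fin n)

theorem numLE_mono (u : Fin n → H) : Monotone (numLE u) := fun _ _ hst =>
  Finset.card_le_card fun _ => by simpa using fun h => h.trans hst

theorem numLE_anti {u v : Fin n → H} (huv : ∀ i, u i ≤ v i) (s : H) :
    numLE v s ≤ numLE u s :=
  Finset.card_le_card fun i => by simpa using (huv i).trans

theorem lt_numLE_iff {u : Fin n → H} (hu : Monotone u) {s : H} {i : Fin n} :
    (i : ℕ) < numLE u s ↔ u i ≤ s := by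
  refine ⟨fun h => not_lt.1 fun hsi => h.not_ge ?_, fun h => ?_⟩
  · refine (Finset.card_le_card fun j hj => ?_).trans_eq (Fin.card_Iio i)
    exact Finset.mem_Iio.2 (hu.reflect_lt ((Finset.mem_filter.1 hj).2.trans_lt hsi))
  · refine Nat.lt_of_succ_le ((Fin.card_Iic i).symm.trans_le (Finset.card_le_card fun j hj => ?_))
    exact Finset.mem_filter.2 ⟨Finset.mem_univ _, (hu (Finset.mem_Iic.1 hj)).trans h⟩

theorem numLE_eq_of_forall {u : Fin n → H} (hu : Monotone u) {s : H} {m : ℕ} (hm : m ≤ n)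
    (h : ∀ i : Fin n, u i ≤ s ↔ (i : ℕ) < m) : numLE u s = m := by
  refine eq_of_forall_lt_iff fun k => ?_
  by_cases hk : k < n
  · exact (lt_numLE_iff hu (i := ⟨k, hk⟩)).trans (h _)
  · exact iff_of_false (fun h' => hk (h'.trans_le (numLE_le u s))) (by omega)

theorem eq_of_numLE_eq {u v : Fin n → H} (hu : Monotone u) (hv : Monotone v)
    (h : numLE u = numLE v) : u = v := by
  have key {u v : Fin n → H} (hu : Monotone u) (hv : Monotone v) (h : numLE u = numLE v) (i) :
      u i ≤ v i := (lt_numLE_iff hu).1 (h ▸ (lt_numLE_iff hv).2 le_rfl)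
  exact funext fun i => le_antisymm (key hu hv h i) (key hv hu h.symm i)

theorem numLE_eventuallyEq_nhdsGE (u : Fin n → ℝ) (s : ℝ) :
    numLE u =ᶠ[𝓝[≥] s] fun _ => numLE u s := by
  have : ∀ᶠ t in 𝓝[≥] s, ∀ i, (u i ≤ t ↔ u i ≤ s) := eventually_all.2 fun i => by
    rcases le_or_gt (u i) s with h | h
    · filter_upwards [self_mem_nhdsWithin] with t ht using iff_of_true (h.trans ht) h
    · filter_upwards [Ico_mem_nhdsGE h] with t ht using iff_of_false ht.2.not_ge h.not_ge
  exact this.mono fun t ht => congrArg Finset.card (Finset.filter_congr fun i _ => ht i)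

theorem numLE_eventually_atBot (u : Fin n → ℝ) : ∀ᶠ s in atBot, numLE u s = 0 := by
  filter_upwards [eventually_all.2 fun i => eventually_lt_atBot (u i)] with s hs
  exact Finset.card_eq_zero.2 (Finset.filter_eq_empty_iff.2 fun i _ => (hs i).not_ge)

theorem numLE_eventually_atTop (u : Fin n → ℝ) : ∀ᶠ s in atTop, numLE u s = n := by
  filter_upwards [eventually_all.2 fun i => eventually_ge_atTop (u i)] with s hs
  simp [numLE, hs]

end Counting

section FlagFunctions

variable {L : Type*} [PartialOrder L] [BoundedOrder L] {F G : ℝ → L}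

structure IsFlagFun (F : ℝ → L) : Prop where
  mono : Monotone F
  eventuallyEq_nhdsGE (s : ℝ) : F =ᶠ[𝓝[≥] s] fun _ => F s
  eventually_atBot : ∀ᶠ s in atBot, F s = ⊥
  eventually_atTop : ∀ᶠ s in atTop, F s = ⊤

namespace IsFlagFun

theorem comp_add_const (hF : IsFlagFun F) (r : ℝ) : IsFlagFun fun s => F (s + r) where
  mono _ _ h := hF.mono (by gcongr)
  eventuallyEq_nhdsGE s := by
    have : Tendsto (· + r) (𝓝[≥] s) (𝓝[≥] (s + r)) :=
      tendsto_nhdsWithin_of_tendsto_nhds_of_eventually_within _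
        ((continuous_add_const r).tendsto' s _ rfl |>.mono_left nhdsWithin_le_nhds)
        (eventually_nhdsWithin_of_forall fun _ ht => by simpa using ht)
    exact this.eventually (hF.eventuallyEq_nhdsGE (s + r))
  eventually_atBot := (tendsto_atBot_add_const_right _ r tendsto_id).eventually hF.eventually_atBot
  eventually_atTop := (tendsto_atTop_add_const_right _ r tendsto_id).eventually hF.eventually_atTop

theorem exists_gt_eq (hF : IsFlagFun F) (s : ℝ) : ∃ x, s < x ∧ F x = F s :=
  (hF.eventuallyEq_nhdsGE s).exists_gt_of_nhdsGE

end IsFlagFun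

theorem exists_isLeast_isFlagFun_ge [WellFoundedLT L] {W : ℝ → L} (hW : Monotone W)
    (hbot : ∀ᶠ s in atBot, W s = ⊥) (htop : ∀ᶠ s in atTop, W s = ⊤) :
    ∃ Z, IsLeast {F | IsFlagFun F ∧ W ≤ F} Z := by
  -- `Z s := W (t s)` is the limit of `W` from the right at `s`
  choose t hst ht using hW.exists_eqOn_Ioc
  have hZW (s x : ℝ) (hsx : s < x) : W (t s) ≤ W x :=
    (le_total x (t s)).elim (fun h => (ht s x ⟨hsx, h⟩).ge) fun h => hW h
  have hWZ : W ≤ fun s => W (t s) := fun s => hW (hst s).le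
  have hZmono : Monotone fun s => W (t s) := fun s s' h => hZW s _ (h.trans_lt (hst s'))
  refine ⟨fun s => W (t s), ⟨⟨hZmono, fun s => ?_, ?_, ?_⟩, hWZ⟩,
    fun F ⟨hF, hWF⟩ s => ?_⟩
  · filter_upwards [Ico_mem_nhdsGE (hst s)] with x hx
    exact le_antisymm (hZW x (t s) hx.2) (hZmono hx.1)
  · filter_upwards [(tendsto_atBot_add_const_right _ 1 tendsto_id).eventually hbot] with s hs
    exact le_bot_iff.1 (hs ▸ hZW s (s + 1) (lt_add_one s))
  · filter_upwards [htop] with s hs using top_le_iff.1 (hs ▸ hWZ s)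
  · obtain ⟨x, hsx, hx⟩ := hF.exists_gt_eq s
    exact (hZW s x hsx).trans ((hWF x).trans_eq hx)

theorem IsFlagFun.of_isGLB [WellFoundedLT L] {S : Set (ℝ → L)} (hS : ∀ F ∈ S, IsFlagFun F)
    (hne : S.Nonempty) (htop : ∀ᶠ s in atTop, G s = ⊤) (hG : IsGLB S G) : IsFlagFun G := by
  have hGs := isGLB_pi.1 hG
  have hmono : Monotone G := fun s s' h => (hGs s').2 <| by
    rintro _ ⟨F, hF, rfl⟩
    exact ((hGs s).1 ⟨F, hF, rfl⟩).trans ((hS F hF).mono h)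
  obtain ⟨F₀, hF₀⟩ := hne
  obtain ⟨Z, ⟨hZ, hGZ⟩, hleast⟩ := exists_isLeast_isFlagFun_ge hmono
    ((hS F₀ hF₀).eventually_atBot.mono fun s hs => le_bot_iff.1 (hs ▸ hG.1 hF₀ s)) htop
  rwa [← le_antisymm (hG.2 fun F hF => hleast ⟨hS F hF, hG.1 hF⟩) hGZ]

end FlagFunctions

noncomputable def jumpTime {L : Type*} [Preorder L] [GradeOrder ℕ L] (F : ℝ → L) (i : ℕ) :
    ℝ :=
  sInf {s | i < grade ℕ (F s)}

namespace IsFlagFun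

variable {L : Type*} [PartialOrder L] [BoundedOrder L] [GradeMinOrder ℕ L] {F G : ℝ → L}

theorem jumpTime_le_iff (hF : IsFlagFun F) {i : ℕ} (hi : i < grade ℕ (⊤ : L)) {s : ℝ} :
    jumpTime F i ≤ s ↔ i < grade ℕ (F s) := by
  refine csInf_setOf_le_iff (fun a b hab h => h.trans_le (grade_mono (hF.mono hab)))
    (fun t h => ?_) ?_ ?_
  · obtain ⟨x, hx, hxt⟩ := hF.exists_gt_eq t
    exact hxt ▸ h x hx
  · obtain ⟨s, hs⟩ := hF.eventually_atTop.exists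
    exact ⟨s, by rwa [hs]⟩
  · obtain ⟨a, ha⟩ := Filter.eventually_atBot.1 hF.eventually_atBot
    refine ⟨a, fun s hs => not_lt.1 fun hsa => ?_⟩
    simp [ha s hsa.le, grade_bot] at hs

theorem jumpTime_mono (hF : IsFlagFun F) {i j : ℕ} (hij : i ≤ j)
    (hj : j < grade ℕ (⊤ : L)) : jumpTime F i ≤ jumpTime F j :=
  (hF.jumpTime_le_iff (hij.trans_lt hj)).2 (hij.trans_lt ((hF.jumpTime_le_iff hj).1 le_rfl))

theorem jumpTime_anti (hF : IsFlagFun F) (hG : IsFlagFun G) (hGF : G ≤ F) {i : ℕ}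
    (hi : i < grade ℕ (⊤ : L)) : jumpTime F i ≤ jumpTime G i :=
  (hF.jumpTime_le_iff hi).2 (((hG.jumpTime_le_iff hi).1 le_rfl).trans_le (grade_mono (hGF _)))

theorem numLE_jumpTime (hF : IsFlagFun F) {n : ℕ} (htop : grade ℕ (⊤ : L) = n) (s : ℝ) :
    numLE (fun i : Fin n => jumpTime F i) s = grade ℕ (F s) :=
  numLE_eq_of_forall (fun i j hij => hF.jumpTime_mono hij (htop ▸ j.2))
    (htop ▸ grade_mono le_top) fun i => hF.jumpTime_le_iff (htop ▸ i.2)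

theorem exists_next_jump (hF : IsFlagFun F) {t : ℝ} (ht : F t ≠ ⊤) :
    ∃ t', t < t' ∧ (∀ s ∈ Ico t t', F s = F t) ∧ grade ℕ (F t) < grade ℕ (F t') := by
  have hi : grade ℕ (F t) < grade ℕ (⊤ : L) := grade_strictMono (lt_top_iff_ne_top.2 ht)
  refine ⟨jumpTime F (grade ℕ (F t)), not_le.1 fun h => ?_, fun s hs => ?_,
    (hF.jumpTime_le_iff hi).1 le_rfl⟩
  · exact ((hF.jumpTime_le_iff hi).1 h).false
  · refine (eq_of_le_of_not_lt (hF.mono hs.1) fun h => hs.2.not_ge ?_).symm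
    exact (hF.jumpTime_le_iff hi).2 (grade_strictMono h)

end IsFlagFun

noncomputable def glue {β : Type*} (G F : ℝ → β) (t s : ℝ) : β :=
  if s < t then G s else F s

section Glue

variable {L : Type*} [PartialOrder L] {F G : ℝ → L}

theorem antitone_glue (hGF : G ≤ F) : Antitone (glue G F) := by
  intro t t' htt' s
  unfold glue
  split_ifs with h₁ h₂ h₂
  · exact le_rfl
  · exact hGF s
  · exact absurd (h₂.trans_le htt') h₁
  · exact le_rfl

theorem isChain_range_glue (hG : Monotone G) (hF : Monotone F) (hGF : G ≤ F) {t t' : ℝ}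
    (htt' : t ≤ t') (hconst : ∀ s ∈ Ico t t', G s = G t) :
    IsChain (· ≤ ·) (range (glue G F t) ∪ range (glue G F t')) := by
  have hcross (s : ℝ) (hs : s < t') (s' : ℝ) (hs' : t ≤ s') : G s ≤ F s' := by
    rcases le_total s s' with h | h
    · exact (hG h).trans (hGF s')
    · exact (hconst s ⟨hs'.trans h, hs⟩).trans_le ((hG hs').trans (hGF s'))
  have hsub : range (glue G F t) ∪ range (glue G F t') ⊆ G '' Iio t' ∪ F '' Ici t := by
    rintro _ (⟨s, rfl⟩ | ⟨s, rfl⟩) <;> unfold glue <;> split_ifs with h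
    · exact .inl ⟨s, h.trans_le htt', rfl⟩
    · exact .inr ⟨s, not_lt.1 h, rfl⟩
    · exact .inl ⟨s, h, rfl⟩
    · exact .inr ⟨s, htt'.trans (not_lt.1 h), rfl⟩
  refine IsChain.mono hsub (isChain_union.2 ⟨hG.isChain_range.mono (image_subset_range _ _),
    hF.isChain_range.mono (image_subset_range _ _), ?_⟩)
  rintro _ ⟨s, hs, rfl⟩ _ ⟨s', hs', rfl⟩ -
  exact .inl (hcross s hs s' hs')

theorem IsFlagFun.glue [BoundedOrder L] (hG : IsFlagFun G) (hF : IsFlagFun F) (hGF : G ≤ F)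
    (t : ℝ) : IsFlagFun (glue G F t) where
  mono s s' h := by
    unfold _root_.glue
    split_ifs with h₁ h₂ h₂
    · exact hG.mono h
    · exact (hG.mono h).trans (hGF s')
    · exact absurd (h.trans_lt h₂) h₁
    · exact hF.mono h
  eventuallyEq_nhdsGE s := by
    by_cases hs : s < t
    · filter_upwards [hG.eventuallyEq_nhdsGE s, mem_nhdsWithin_of_mem_nhds (Iio_mem_nhds hs)]
        with x hx hxt
      simp [_root_.glue, hs, mem_Iio.1 hxt, hx]
    · filter_upwards [hF.eventuallyEq_nhdsGE s, self_mem_nhdsWithin] with x hx hsx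
      simp [_root_.glue, hs, not_lt.2 ((not_lt.1 hs).trans hsx), hx]
  eventually_atBot := by
    filter_upwards [hG.eventually_atBot, eventually_lt_atBot t] with s hs hst
    simp [_root_.glue, hst, hs]
  eventually_atTop := by
    filter_upwards [hF.eventually_atTop, eventually_ge_atTop t] with s hs hts
    simp [_root_.glue, not_lt.2 hts, hs]

end Glue

section Interleaving

variable {L : Type*} {F G K : ℝ → L} {t t' : ℝ}

def Interleaved [LE L] (F G : ℝ → L) (t : ℝ) : Prop :=
  ∀ s, F s ≤ G (s + t) ∧ G s ≤ F (s + t)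

theorem Interleaved.symm [LE L] (h : Interleaved F G t) : Interleaved G F t :=
  fun s => (h s).symm

theorem Interleaved.trans [Preorder L] (h₁ : Interleaved F G t) (h₂ : Interleaved G K t') :
    Interleaved F K (t + t') :=
  fun s => ⟨((h₁ s).1.trans (h₂ _).1).trans_eq (by rw [add_assoc]),
    ((h₂ s).2.trans (h₁ _).2).trans_eq (by rw [add_assoc, add_comm t'])⟩

theorem Interleaved.mono [Preorder L] (hF : Monotone F) (hG : Monotone G)
    (h : Interleaved F G t) (htt' : t ≤ t') : Interleaved F G t' := fun s =>
  ⟨(h s).1.trans (hG (by linarith)), (h s).2.trans (hF (by linarith))⟩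

theorem interleaved_zero_iff [PartialOrder L] : Interleaved F G 0 ↔ F = G := by
  simp only [Interleaved, add_zero]
  exact ⟨fun h => funext fun s => le_antisymm (h s).1 (h s).2, fun h s => by simp [h]⟩

theorem exists_le_comp_add [LE L] [BoundedOrder L] (hF : ∀ᶠ s in atBot, F s = ⊥)
    (hG : ∀ᶠ s in atTop, G s = ⊤) : ∃ t, ∀ s, F s ≤ G (s + t) := by
  obtain ⟨a, ha⟩ := Filter.eventually_atBot.1 hF
  obtain ⟨b, hb⟩ := Filter.eventually_atTop.1 hG
  refine ⟨b - a, fun s => (le_total s a).elim (fun h => ?_) fun h => ?_⟩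
  · exact (ha s h).symm ▸ bot_le
  · exact (hb (s + (b - a)) (by linarith)).symm ▸ le_top

variable [PartialOrder L] [BoundedOrder L]

theorem Interleaved.of_forall_gt (hF : IsFlagFun F) (hG : IsFlagFun G)
    (h : ∀ t' > t, Interleaved F G t') : Interleaved F G t := fun s => by
  obtain ⟨x, hx, hFx, hGx⟩ := (((hF.comp_add_const s).eventuallyEq_nhdsGE t).and
    ((hG.comp_add_const s).eventuallyEq_nhdsGE t)).exists_gt_of_nhdsGE
  simp only [add_comm _ s] at hFx hGx
  exact ⟨(h x hx s).1.trans_eq hGx, (h x hx s).2.trans_eq hFx⟩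

theorem IsFlagFun.exists_interleaved (hF : IsFlagFun F) (hG : IsFlagFun G) :
    ∃ t, 0 ≤ t ∧ Interleaved F G t := by
  obtain ⟨t₁, h₁⟩ := exists_le_comp_add hF.eventually_atBot hG.eventually_atTop
  obtain ⟨t₂, h₂⟩ := exists_le_comp_add hG.eventually_atBot hF.eventually_atTop
  refine ⟨max 0 (max t₁ t₂), le_max_left _ _, fun s => ⟨(h₁ s).trans (hG.mono ?_),
    (h₂ s).trans (hF.mono ?_)⟩⟩ <;> simp

theorem IsFlagFun.csInf_interleaved_le_iff (hF : IsFlagFun F) (hG : IsFlagFun G) {r : ℝ} :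
    sInf {t | 0 ≤ t ∧ Interleaved F G t} ≤ r ↔ 0 ≤ r ∧ Interleaved F G r :=
  csInf_setOf_le_iff (fun _ _ hab h => ⟨h.1.trans hab, h.2.mono hF.mono hG.mono hab⟩)
    (fun _ h => ⟨le_of_forall_gt_imp_ge_of_dense fun t' ht' => (h t' ht').1,
      Interleaved.of_forall_gt hF hG fun t' ht' => (h t' ht').2⟩)
    (hF.exists_interleaved hG) ⟨0, fun _ h => h.1⟩

end Interleaving

theorem exists_isFlagFun_interleaved {L : Type*} [SemilatticeSup L] [BoundedOrder L]
    [WellFoundedLT L] [WellFoundedGT L] {ι : Type*} [Nonempty ι] {F : ι → ℝ → L}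
    (hF : ∀ i, IsFlagFun (F i)) {r : ι → ℝ}
    (h : ∀ i j, Interleaved (F i) (F j) (r i + r j)) :
    ∃ Z, IsFlagFun Z ∧ ∀ i, Interleaved (F i) Z (r i) := by
  -- `Z` is the right-continuous regularization of `W : s ↦ ⨆ i, F i (s - r i)`
  obtain ⟨W, hW⟩ := Pi.exists_isLUB_of_wellFoundedGT (range_nonempty fun i s => F i (s - r i))
  have hle (i : ι) : (fun s => F i (s - r i)) ≤ W := hW.1 ⟨i, rfl⟩
  have hge (i : ι) : W ≤ fun s => F i (s + r i) := hW.2 <| by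
    rintro _ ⟨j, rfl⟩ s
    have := ((h i j).symm (s - r j)).1
    rwa [show s - r j + (r i + r j) = s + r i by ring] at this
  have hmono : Monotone W := fun s s' hss' => by
    have hshift : W ≤ fun x => W (x + (s' - s)) := hW.2 <| by
      rintro _ ⟨i, rfl⟩ x
      exact ((hF i).mono (by linarith)).trans (hle i (x + (s' - s)))
    simpa using hshift s
  obtain ⟨i₀⟩ := ‹Nonempty ι›
  obtain ⟨Z, ⟨hZ, hWZ⟩, hleast⟩ := exists_isLeast_isFlagFun_ge hmono
    (((hF i₀).comp_add_const (r i₀)).eventually_atBot.mono fun s hs =>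
      le_bot_iff.1 (hs ▸ hge i₀ s))
    (((hF i₀).comp_add_const (-r i₀)).eventually_atTop.mono fun s hs =>
      top_le_iff.1 (hs ▸ (sub_eq_add_neg s (r i₀)) ▸ hle i₀ s))
  refine ⟨Z, hZ, fun i s => ⟨?_, hleast ⟨(hF i).comp_add_const (r i), hge i⟩ s⟩⟩
  simpa using (hle i (s + r i)).trans (hWZ _)

namespace AffinePt

variable {L : Type} [Lattice L] [BoundedOrder L] {n : ℕ}

section LinearOrder

variable {H : Type} [LinearOrder H] {p q : AffinePt L n H}

def flagFun (p : AffinePt L n H) (s : H) : L :=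
  p.c ⟨numLE p.u s, Nat.lt_succ_of_le (numLE_le p.u s)⟩

theorem flagFun_apply_of_numLE_eq (p : AffinePt L n H) {s : H} {k : Fin (n + 1)}
    (h : numLE p.u s = k) : p.flagFun s = p.c k :=
  congrArg p.c (Fin.ext h)

theorem flagFun_mono (p : AffinePt L n H) : Monotone p.flagFun := fun _ _ h =>
  p.hcmono.monotone (Fin.mk_le_mk.2 (numLE_mono p.u h))

theorem flagFun_eq_of_basicRel (h : basicRel p q) : p.flagFun = q.flagFun := by
  obtain ⟨hu, hc⟩ := h
  funext s
  set k : Fin (n + 1) := ⟨numLE p.u s, Nat.lt_succ_of_le (numLE_le _ _)⟩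
  have hks : (k : ℕ) = numLE p.u s := rfl
  rw [q.flagFun_apply_of_numLE_eq (k := k) (by rw [hks, hu])]
  show p.c k = q.c k
  clear_value k
  obtain ⟨_ | j, hk⟩ := k
  · exact p.hc0.trans q.hc0.symm
  by_cases hjn : j + 1 = n
  · have hlast : (⟨j + 1, hk⟩ : Fin (n + 1)) = Fin.last n := Fin.ext hjn
    rw [hlast, p.hcn, q.hcn]
  -- `u_j ≤ s < u_{j+1}`, so this is not a flat step of `u`
  by_contra hne
  have hj : j + 1 < n := by omega
  have h₁ := (lt_numLE_iff p.humono (i := ⟨j, by omega⟩) (s := s)).1 (by simp [← hks])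
  have h₂ := (lt_numLE_iff p.humono (i := ⟨j + 1, hj⟩) (s := s)).not.1 (by simp [← hks])
  exact h₂ (hc j hj hne ▸ h₁)

theorem flagFun_le_of_c_eq (hc : p.c = q.c) (hu : ∀ k, p.u k ≤ q.u k) :
    q.flagFun ≤ p.flagFun := fun s => by
  show q.c _ ≤ p.c _
  rw [hc]
  exact q.hcmono.monotone (Fin.mk_le_mk.2 (numLE_anti hu s))

variable [GradeOrder ℕ L]

theorem grade_flagFun (htop : grade ℕ (⊤ : L) = n) (p : AffinePt L n H) (s : H) :
    grade ℕ (p.flagFun s) = numLE p.u s :=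
  p.hcmono.grade_apply htop _

theorem basicRel_of_flagFun_eq (htop : grade ℕ (⊤ : L) = n) (h : p.flagFun = q.flagFun) :
    basicRel p q := by
  have hu : p.u = q.u := eq_of_numLE_eq p.humono q.humono <| funext fun s => by
    rw [← grade_flagFun htop, ← grade_flagFun htop, h]
  -- at `s = u_j < u_{j+1}` both functions take the values `c_{j+1}` and `c'_{j+1}`
  refine ⟨hu, fun j hj hne => by_contra fun hne' => hne ?_⟩
  have hlt : p.u ⟨j, by omega⟩ < p.u ⟨j + 1, hj⟩ :=
    (p.humono (Fin.mk_le_mk.2 j.le_succ)).lt_of_ne hne'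
  have hnum : numLE p.u (p.u ⟨j, by omega⟩) = j + 1 := by
    refine numLE_eq_of_forall p.humono hj.le fun i => ⟨fun hi => not_le.1 fun hji => ?_,
      fun hi => p.humono (Fin.mk_le_mk.2 (Nat.lt_succ_iff.1 hi))⟩
    exact hi.not_gt (hlt.trans_le (p.humono (Fin.mk_le_mk.2 hji)))
  rw [← p.flagFun_apply_of_numLE_eq hnum, ← q.flagFun_apply_of_numLE_eq (by rwa [← hu]), h]

end LinearOrder

theorem isFlagFun (p : AffinePt L n ℝ) : IsFlagFun p.flagFun where
  mono := p.flagFun_mono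
  eventuallyEq_nhdsGE s := (numLE_eventuallyEq_nhdsGE p.u s).mono fun _ ht =>
    p.flagFun_apply_of_numLE_eq ht
  eventually_atBot := (numLE_eventually_atBot p.u).mono fun _ hs =>
    (p.flagFun_apply_of_numLE_eq (k := 0) hs).trans p.hc0
  eventually_atTop := (numLE_eventually_atTop p.u).mono fun _ hs =>
    (p.flagFun_apply_of_numLE_eq (k := Fin.last n) hs).trans p.hcn

theorem flagFun_translatePt (t : ℝ) (p : AffinePt L n ℝ) (s : ℝ) :
    (translatePt t p).flagFun s = p.flagFun (s - t) :=
  (translatePt t p).flagFun_apply_of_numLE_eq <| congrArg Finset.card <|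
    Finset.filter_congr fun _ _ => le_sub_iff_add_le.symm

theorem exists_flagFun_eq_pair [GradeMinOrder ℕ L] (htop : grade ℕ (⊤ : L) = n)
    {F G : ℝ → L} (hF : IsFlagFun F) (hG : IsFlagFun G) (hGF : G ≤ F)
    (hch : IsChain (· ≤ ·) (range F ∪ range G)) :
    ∃ p q : AffinePt L n ℝ,
      p.c = q.c ∧ (∀ k, p.u k ≤ q.u k) ∧ p.flagFun = F ∧ q.flagFun = G := by
  obtain ⟨c, hc, hc0, hcn, hsub⟩ := hch.exists_strictMono_fin htop
  have hi (i : Fin n) : (i : ℕ) < grade ℕ (⊤ : L) := htop ▸ i.2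
  -- the coordinates are the jump times, the chain interpolates the values
  let pt (K : ℝ → L) (hK : IsFlagFun K) : AffinePt L n ℝ :=
    ⟨c, hc0, hcn, hc, fun i => jumpTime K i, fun i j hij => hK.jumpTime_mono hij (hi j)⟩
  have realize {K : ℝ → L} (hK : IsFlagFun K) (hKc : range K ⊆ range c) :
      (pt K hK).flagFun = K := by
    funext s
    obtain ⟨k, hk⟩ := hKc ⟨s, rfl⟩
    refine (flagFun_apply_of_numLE_eq _ ?_).trans hk
    rw [hK.numLE_jumpTime htop, ← hk, hc.grade_apply htop]
  exact ⟨pt F hF, pt G hG, rfl, fun i => hF.jumpTime_anti hG hGF (hi i),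
    realize hF (subset_union_left.trans hsub), realize hG (subset_union_right.trans hsub)⟩

end AffinePt

namespace AffineVersion

variable {L : Type} [Lattice L] [BoundedOrder L] {n : ℕ}

section LinearOrder

variable {H : Type} [LinearOrder H]

def flagFun : AffineVersion L n H → H → L :=
  Quot.lift AffinePt.flagFun fun _ _ => AffinePt.flagFun_eq_of_basicRel

theorem flagFun_anti_of_leM {α β : AffineVersion L n H} (h : leM α β) :
    flagFun β ≤ flagFun α := by
  induction h with
  | refl => exact le_rfl
  | tail _ hstep ih =>
    obtain ⟨p, q, rfl, rfl, hc, hu⟩ := hstep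
    exact (AffinePt.flagFun_le_of_c_eq hc hu).trans ih

variable [GradeOrder ℕ L]

theorem flagFun_injective (htop : grade ℕ (⊤ : L) = n) :
    Function.Injective (flagFun : AffineVersion L n H → H → L) := by
  rintro ⟨p⟩ ⟨q⟩ h
  exact Quot.sound (AffinePt.basicRel_of_flagFun_eq htop h)

theorem leM_antisymm (htop : grade ℕ (⊤ : L) = n) {α β : AffineVersion L n H}
    (h₁ : leM α β) (h₂ : leM β α) : α = β :=
  flagFun_injective htop (le_antisymm (flagFun_anti_of_leM h₂) (flagFun_anti_of_leM h₁))

end LinearOrder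

theorem isFlagFun (α : AffineVersion L n ℝ) : IsFlagFun (flagFun α) := by
  induction α using Quot.ind
  exact AffinePt.isFlagFun _

theorem flagFun_translateAff (t : ℝ) (α : AffineVersion L n ℝ) (s : ℝ) :
    flagFun (translateAff t α) s = flagFun α (s - t) := by
  induction α using Quot.ind
  exact AffinePt.flagFun_translatePt t _ s

variable [GradeMinOrder ℕ L] {F G : ℝ → L}

theorem exists_flagFun_eq (htop : grade ℕ (⊤ : L) = n) (hF : IsFlagFun F) :
    ∃ α : AffineVersion L n ℝ, flagFun α = F := by
  obtain ⟨p, -, -, -, hp, -⟩ := AffinePt.exists_flagFun_eq_pair htop hF hF le_rfl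
    (by simpa using hF.mono.isChain_range)
  exact ⟨mkA p, hp⟩

theorem stepLe_of_isChain (htop : grade ℕ (⊤ : L) = n) (hF : IsFlagFun F) (hG : IsFlagFun G)
    (hGF : G ≤ F) (hch : IsChain (· ≤ ·) (range F ∪ range G))
    {α β : AffineVersion L n ℝ} (hα : flagFun α = F) (hβ : flagFun β = G) : stepLe α β := by
  obtain ⟨p, q, hc, hu, hp, hq⟩ := AffinePt.exists_flagFun_eq_pair htop hF hG hGF hch
  exact ⟨p, q, flagFun_injective htop (hp.trans hα.symm),
    flagFun_injective htop (hq.trans hβ.symm), hc, hu⟩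

theorem leM_of_flagFun_eq_glue (htop : grade ℕ (⊤ : L) = n) (hF : IsFlagFun F)
    (hG : IsFlagFun G) (hGF : G ≤ F) {β : AffineVersion L n ℝ} (hβ : flagFun β = G) (t : ℝ)
    (γ : AffineVersion L n ℝ) (hγ : flagFun γ = glue G F t) : leM γ β := by
  by_cases hGt : G t = ⊤
  · refine flagFun_injective htop (hγ.trans (funext fun s => ?_)) ▸ Relation.ReflTransGen.refl
    by_cases hs : s < t
    · simp [glue, hs, hβ]
    · have hGs : G s = ⊤ := top_le_iff.1 (hGt ▸ hG.mono (not_lt.1 hs))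
      simp [glue, hs, hβ, hGs, top_le_iff.1 (hGs ▸ hGF s)]
  -- move the gluing point to the next jump of `G`; on the way `G` is constant
  obtain ⟨t', htt', hconst, hlt⟩ := hG.exists_next_jump hGt
  obtain ⟨γ', hγ'⟩ := exists_flagFun_eq htop (hG.glue hF hGF t')
  exact .head (stepLe_of_isChain htop (hG.glue hF hGF t) (hG.glue hF hGF t')
    (antitone_glue hGF htt'.le) (isChain_range_glue hG.mono hF.mono hGF htt'.le hconst) hγ hγ')
    (leM_of_flagFun_eq_glue htop hF hG hGF hβ t' γ' hγ')
termination_by grade ℕ (⊤ : L) - grade ℕ (G t)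
decreasing_by
  have := grade_mono (𝕆 := ℕ) (le_top : G t' ≤ ⊤)
  omega

theorem leM_iff_flagFun_le (htop : grade ℕ (⊤ : L) = n) {α β : AffineVersion L n ℝ} :
    leM α β ↔ flagFun β ≤ flagFun α := by
  refine ⟨flagFun_anti_of_leM, fun h => ?_⟩
  obtain ⟨a, ha⟩ := Filter.eventually_atBot.1
    ((isFlagFun α).eventually_atBot.and (isFlagFun β).eventually_atBot)
  refine leM_of_flagFun_eq_glue htop (isFlagFun α) (isFlagFun β) h rfl a α (funext fun s => ?_)
  by_cases hs : s < a
  · simp [glue, hs, (ha s hs.le).1, (ha s hs.le).2]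
  · simp [glue, hs]

theorem exists_meet (htop : grade ℕ (⊤ : L) = n) (α β : AffineVersion L n ℝ) :
    ∃ m, leM m α ∧ leM m β ∧ ∀ w, leM w α → leM w β → leM w m := by
  obtain ⟨Z, ⟨hZ, hWZ⟩, hleast⟩ := exists_isLeast_isFlagFun_ge
    ((isFlagFun α).mono.sup (isFlagFun β).mono)
    (((isFlagFun α).eventually_atBot.and (isFlagFun β).eventually_atBot).mono fun s hs => by
      simp [hs.1, hs.2])
    ((isFlagFun α).eventually_atTop.mono fun s hs => by simp [hs])
  obtain ⟨m, rfl⟩ := exists_flagFun_eq htop hZ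
  refine ⟨m, ?_⟩
  simp only [leM_iff_flagFun_le htop]
  exact ⟨le_sup_left.trans hWZ, le_sup_right.trans hWZ,
    fun w hα hβ => hleast ⟨isFlagFun w, sup_le hα hβ⟩⟩

theorem exists_join (htop : grade ℕ (⊤ : L) = n) (α β : AffineVersion L n ℝ) :
    ∃ j, leM α j ∧ leM β j ∧ ∀ w, leM α w → leM β w → leM j w := by
  have hG : IsFlagFun (flagFun α ⊓ flagFun β) := .of_isGLB
    (by rintro _ (rfl | rfl) <;> exact isFlagFun _)
    (insert_nonempty _ _)
    (((isFlagFun α).eventually_atTop.and (isFlagFun β).eventually_atTop).mono fun s hs => by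
      simp [hs.1, hs.2])
    isGLB_pair
  obtain ⟨j, hj⟩ := exists_flagFun_eq htop hG
  refine ⟨j, ?_⟩
  simp only [leM_iff_flagFun_le htop, hj]
  exact ⟨inf_le_left, inf_le_right, fun w => le_inf⟩

theorem exists_lub (htop : grade ℕ (⊤ : L) = n) (S : Set (AffineVersion L n ℝ))
    (hne : S.Nonempty) (hbdd : ∃ b, ∀ x ∈ S, leM x b) :
    ∃ l, (∀ x ∈ S, leM x l) ∧ ∀ b, (∀ x ∈ S, leM x b) → leM l b := by
  obtain ⟨b, hb⟩ := hbdd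
  obtain ⟨G, hG⟩ := Pi.exists_isGLB_of_wellFoundedLT (hne.image flagFun)
  have hbG : flagFun b ≤ G := hG.2 <| by
    rintro _ ⟨x, hx, rfl⟩
    exact flagFun_anti_of_leM (hb x hx)
  have hGflag : IsFlagFun G := .of_isGLB (by rintro _ ⟨x, -, rfl⟩; exact isFlagFun x)
    (hne.image _) ((isFlagFun b).eventually_atTop.mono fun s hs => top_le_iff.1 (hs ▸ hbG s)) hG
  obtain ⟨l, rfl⟩ := exists_flagFun_eq htop hGflag
  refine ⟨l, ?_⟩
  simp only [leM_iff_flagFun_le htop]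
  exact ⟨fun x hx => hG.1 ⟨x, hx, rfl⟩,
    fun b hb => hG.2 (by rintro _ ⟨x, hx, rfl⟩; exact hb x hx)⟩

theorem leM_translateAff_iff_interleaved (htop : grade ℕ (⊤ : L) = n)
    {α β : AffineVersion L n ℝ} {t : ℝ} :
    (leM (translateAff (-t) α) β ∧ leM β (translateAff t α)) ↔
      Interleaved (flagFun α) (flagFun β) t := by
  simp only [leM_iff_flagFun_le htop, Pi.le_def, flagFun_translateAff, sub_neg_eq_add]
  exact ⟨fun h s => ⟨by simpa using h.2 (s + t), h.1 s⟩,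
    fun h => ⟨fun s => (h s).2, fun s => by simpa using (h (s - t)).1⟩⟩

theorem csInf_translateAff_le_iff (htop : grade ℕ (⊤ : L) = n) (α β : AffineVersion L n ℝ)
    {r : ℝ} :
    sInf {t | 0 ≤ t ∧ leM (translateAff (-t) α) β ∧ leM β (translateAff t α)} ≤ r ↔
      0 ≤ r ∧ Interleaved (flagFun α) (flagFun β) r := by
  simp only [leM_translateAff_iff_interleaved htop]
  exact (isFlagFun α).csInf_interleaved_le_iff (isFlagFun β)

theorem exists_interleaved (htop : grade ℕ (⊤ : L) = n) {ι : Type*}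
    (x : ι → AffineVersion L n ℝ) {r : ι → ℝ}
    (h : ∀ i j, Interleaved (flagFun (x i)) (flagFun (x j)) (r i + r j)) :
    ∃ z : AffineVersion L n ℝ, ∀ i, Interleaved (flagFun (x i)) (flagFun z) (r i) := by
  cases isEmpty_or_nonempty ι
  · obtain ⟨c, hc, hc0, hcn, -⟩ :=
      (IsChain.empty (r := (· ≤ · : L → L → Prop))).exists_strictMono_fin htop
    exact ⟨mkA ⟨c, hc0, hcn, hc, 0, monotone_const⟩, isEmptyElim⟩
  obtain ⟨Z, hZ, hxZ⟩ := exists_isFlagFun_interleaved (fun i => isFlagFun (x i)) h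
  obtain ⟨z, rfl⟩ := exists_flagFun_eq htop hZ
  exact ⟨z, hxZ⟩

end AffineVersion

open AffineVersion

/-- `(M_ℝ, ≤_M)` is a lattice in which every (nonempty) subset bounded above has a
least upper bound, and `d(α,β) = inf {t ≥ 0 : (-t)·α ≤_M β ≤_M t·α}` is a metric on
`M_ℝ` making it an injective metric space. -/
theorem stmt14 (L : Type) [Lattice L] [BoundedOrder L] (n : ℕ)
    (rk : L → ℕ) (hrk0 : rk ⊥ = 0) (hrkn : rk ⊤ = n)
    (hrkmono : StrictMono rk)
    (hrkcov : ∀ x y : L, x ⋖ y → rk y = rk x + 1)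
    (d : AffineVersion L n ℝ → AffineVersion L n ℝ → ℝ)
    (hd : ∀ α β : AffineVersion L n ℝ,
      d α β = sInf {t : ℝ | 0 ≤ t ∧ leM (translateAff (-t) α) β ∧ leM β (translateAff t α)}) :
    -- (M_ℝ, ≤_M) is a poset and a lattice
    (∀ α β : AffineVersion L n ℝ, leM α β → leM β α → α = β) ∧
    (∀ α β : AffineVersion L n ℝ,
      ∃ m, leM m α ∧ leM m β ∧ ∀ w, leM w α → leM w β → leM w m) ∧
    (∀ α β : AffineVersion L n ℝ,
      ∃ j, leM α j ∧ leM β j ∧ ∀ w, leM α w → leM β w → leM j w) ∧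
    -- every subset bounded above has a least upper bound
    (∀ s : Set (AffineVersion L n ℝ), s.Nonempty → (∃ b, ∀ x ∈ s, leM x b) →
      ∃ l, (∀ x ∈ s, leM x l) ∧ ∀ b, (∀ x ∈ s, leM x b) → leM l b) ∧
    -- d is a metric
    (∀ α β, 0 ≤ d α β) ∧
    (∀ α β, (d α β = 0 ↔ α = β)) ∧
    (∀ α β, d α β = d β α) ∧
    (∀ α β γ, d α γ ≤ d α β + d β γ) ∧
    -- (M_ℝ, d) is injective
    (∀ (ι : Type) (x : ι → AffineVersion L n ℝ) (r : ι → ℝ), (∀ i, 0 ≤ r i) →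
      (∀ i j, d (x i) (x j) ≤ r i + r j) → ∃ z, ∀ i, d (x i) z ≤ r i) := by
  let _ : GradeMinOrder ℕ L :=
    { grade := rk
      grade_strictMono := hrkmono
      covBy_grade := fun a b h => Nat.covBy_iff_add_one_eq.2 (hrkcov a b h).symm
      isMin_grade := fun a ha => ha.eq_bot ▸ hrk0 ▸ isMin_bot }
  have htop : grade ℕ (⊤ : L) = n := hrkn
  have hd_le (α β : AffineVersion L n ℝ) (r : ℝ) :
      d α β ≤ r ↔ 0 ≤ r ∧ Interleaved (flagFun α) (flagFun β) r :=
    hd α β ▸ csInf_translateAff_le_iff htop α β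
  have hd_nonneg (α β) : 0 ≤ d α β := ((hd_le α β _).1 le_rfl).1
  have hd_interleaved (α β) : Interleaved (flagFun α) (flagFun β) (d α β) :=
    ((hd_le α β _).1 le_rfl).2
  refine ⟨fun _ _ => leM_antisymm htop, exists_meet htop, exists_join htop, exists_lub htop,
    hd_nonneg, fun α β => ?_, fun α β => ?_, fun α β γ => ?_, fun ι x r hr hxr => ?_⟩
  · rw [← (hd_nonneg α β).ge_iff_eq', hd_le, interleaved_zero_iff,
      (flagFun_injective htop).eq_iff]
    exact and_iff_right le_rfl
  · exact le_antisymm ((hd_le α β _).2 ⟨hd_nonneg β α, (hd_interleaved β α).symm⟩)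
      ((hd_le β α _).2 ⟨hd_nonneg α β, (hd_interleaved α β).symm⟩)
  · exact (hd_le α γ _).2 ⟨add_nonneg (hd_nonneg α β) (hd_nonneg β γ),
      (hd_interleaved α β).trans (hd_interleaved β γ)⟩
  · obtain ⟨z, hz⟩ := exists_interleaved htop x fun i j => ((hd_le _ _ _).1 (hxr i j)).2
    exact ⟨z, fun i => (hd_le _ _ _).2 ⟨hr i, hz i⟩⟩
end

section
/- Let L be a meet-semilattice equipped with a strictly monotone rank function rk : L → ℕ bounded above by some N ∈ ℕ, and assume L is flag: any three elements which are pairwise bounded above have a common upper bound. Then every nonempty family of elements of L which are pairwise bounded above has a least upper bound in L. -/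
private lemma minOfMeetClosed {L : Type} [SemilatticeInf L] (rk : L → ℕ)
    (hrkmono : StrictMono rk) (U : Set L) (hne : U.Nonempty)
    (hmeet : ∀ u ∈ U, ∀ v ∈ U, u ⊓ v ∈ U) :
    ∃ m ∈ U, ∀ v ∈ U, m ≤ v := by
  have himg : (rk '' U).Nonempty := hne.image rk
  obtain ⟨m, hmU, hm⟩ := Nat.sInf_mem himg
  refine ⟨m, hmU, fun v hv => ?_⟩
  have h1 : m ⊓ v ∈ U := hmeet m hmU v hv
  have h2 : sInf (rk '' U) ≤ rk (m ⊓ v) := Nat.sInf_le ⟨m ⊓ v, h1, rfl⟩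
  rcases lt_or_eq_of_le (inf_le_left : m ⊓ v ≤ m) with hlt | heq
  · exact absurd (hrkmono hlt) (by omega)
  · exact inf_eq_left.mp heq

private lemma finsetLUB {L : Type} [SemilatticeInf L] (rk : L → ℕ)
    (hrkmono : StrictMono rk)
    (hflag : ∀ a b c : L,
      (∃ u, a ≤ u ∧ b ≤ u) → (∃ u, a ≤ u ∧ c ≤ u) → (∃ u, b ≤ u ∧ c ≤ u) →
      ∃ u, a ≤ u ∧ b ≤ u ∧ c ≤ u)
    (F : Finset L) (hF : F.Nonempty)
    (hp : ∀ a ∈ F, ∀ b ∈ F, ∃ u, a ≤ u ∧ b ≤ u) :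
    ∃ l, IsLUB (↑F : Set L) l ∧
      ∀ y : L, (∀ f ∈ F, ∃ u, y ≤ u ∧ f ≤ u) → ∃ u, y ≤ u ∧ l ≤ u := by
  induction F using Finset.cons_induction with
  | empty => exact absurd hF (by simp)
  | cons b G hbG ih =>
    rcases G.eq_empty_or_nonempty with hGe | hGne
    · subst hGe
      refine ⟨b, by simpa using isLUB_singleton, fun y hy => ?_⟩
      exact hy b (by simp)
    · have hpG : ∀ a ∈ G, ∀ c ∈ G, ∃ u, a ≤ u ∧ c ≤ u := fun a ha c hc =>
        hp a (Finset.mem_cons_of_mem ha) c (Finset.mem_cons_of_mem hc)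
      obtain ⟨g, hg, hgprop⟩ := ih hGne hpG
      have hbg : ∃ u, b ≤ u ∧ g ≤ u := by
        refine hgprop b (fun f hf => ?_)
        exact hp b (Finset.mem_cons_self _ _) f (Finset.mem_cons_of_mem hf)
      -- least element of upper bounds of {b, g}
      have hU : ∃ m ∈ {u : L | b ≤ u ∧ g ≤ u}, ∀ v ∈ {u : L | b ≤ u ∧ g ≤ u}, m ≤ v := by
        refine minOfMeetClosed rk hrkmono _ hbg ?_
        rintro u ⟨hu1, hu2⟩ v ⟨hv1, hv2⟩
        exact ⟨le_inf hu1 hv1, le_inf hu2 hv2⟩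
      obtain ⟨l, ⟨hbl, hgl⟩, hlleast⟩ := hU
      have hlub : IsLUB (↑(Finset.cons b G hbG) : Set L) l := by
        constructor
        · rintro x hx
          simp only [Finset.coe_cons, Set.mem_insert_iff] at hx
          rcases hx with rfl | hx
          · exact hbl
          · exact le_trans (hg.1 hx) hgl
        · intro u hu
          have hub : b ≤ u := hu (by simp)
          have hug : g ≤ u := hg.2 (fun x hx => hu (by simp [hx]))
          exact hlleast u ⟨hub, hug⟩
      refine ⟨l, hlub, fun y hy => ?_⟩
      have h1 : ∃ u, y ≤ u ∧ b ≤ u := hy b (Finset.mem_cons_self _ _)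
      have h2 : ∃ u, y ≤ u ∧ g ≤ u :=
        hgprop y (fun f hf => hy f (Finset.mem_cons_of_mem hf))
      obtain ⟨u, hyu, hbu, hgu⟩ := hflag y b g h1 h2 hbg
      exact ⟨u, hyu, hlleast u ⟨hbu, hgu⟩⟩

/-- In a flag meet-semilattice with a strictly monotone rank function bounded above,
every nonempty family of pairwise upper-bounded elements has a least upper bound. -/
theorem stmt15 (L : Type) [SemilatticeInf L] (rk : L → ℕ) (N : ℕ)
    (hrkmono : StrictMono rk) (hrkbdd : ∀ x : L, rk x ≤ N)
    (hflag : ∀ a b c : L,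
      (∃ u, a ≤ u ∧ b ≤ u) → (∃ u, a ≤ u ∧ c ≤ u) → (∃ u, b ≤ u ∧ c ≤ u) →
      ∃ u, a ≤ u ∧ b ≤ u ∧ c ≤ u)
    (s : Set L) (hs : s.Nonempty)
    (hpair : ∀ a ∈ s, ∀ b ∈ s, ∃ u, a ≤ u ∧ b ≤ u) :
    ∃ l, IsLUB s l := by
  classical
  -- T : LUBs of finite nonempty subsets of s
  set P : ℕ → Prop := fun n =>
    ∃ l : L, rk l = n ∧ ∃ F : Finset L, (↑F : Set L) ⊆ s ∧ F.Nonempty ∧ IsLUB (↑F : Set L) l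
    with hP
  obtain ⟨a, ha⟩ := hs
  have hPa : P (rk a) := by
    refine ⟨a, rfl, {a}, by simpa using ha, ⟨a, by simp⟩, by simpa using isLUB_singleton⟩
  have hbdd : ∀ n, P n → n ≤ N := by
    rintro n ⟨l, rfl, -⟩; exact hrkbdd l
  have hSne : {n | P n}.Nonempty := ⟨rk a, hPa⟩
  have hSbdd : BddAbove {n | P n} := ⟨N, fun n hn => hbdd n hn⟩
  have hmem : sSup {n | P n} ∈ {n | P n} := Nat.sSup_mem hSne hSbdd
  have hmax : ∀ m, P m → m ≤ sSup {n | P n} := fun m hm => le_csSup hSbdd hm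
  obtain ⟨l, hln, F, hFs, hFne, hlub⟩ := hmem
  refine ⟨l, ?_, fun u hu => hlub.2 (fun x hx => hu (hFs hx))⟩
  intro x hx
  have hF'sub : (↑(insert x F) : Set L) ⊆ s := by
    intro y hy
    simp only [Finset.coe_insert, Set.mem_insert_iff] at hy
    rcases hy with rfl | hy
    · exact hx
    · exact hFs hy
  obtain ⟨l', hlub', -⟩ := finsetLUB rk hrkmono hflag (insert x F) ⟨x, by simp⟩
    (fun p hp q hq => hpair p (hF'sub hp) q (hF'sub hq))
  have hll' : l ≤ l' := hlub.2 (fun y hy => hlub'.1 (by simp [Finset.mem_coe.mp hy]))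
  have hP' : P (rk l') := ⟨l', rfl, insert x F, hF'sub, ⟨x, by simp⟩, hlub'⟩
  have : rk l' ≤ sSup {n | P n} := hmax _ hP'
  have hle : l' = l := by
    rcases lt_or_eq_of_le hll' with hlt | rfl
    · exact absurd (hrkmono hlt) (by omega)
    · rfl
  have hxl' : x ≤ l' := hlub'.1 (by simp)
  rw [hle] at hxl'
  exact hxl'
end

section
/- Let L = {gP_i : g ∈ A(B_n), 1 ≤ i ≤ n} ∪ {0} and define the relation ≤ on L by: 0 ≤ x for every x ∈ L, and g_1P_{k_1} ≤ g_2P_{k_2} iff k_1 ≤ k_2 and g_1P_{k_1} ∩ g_2P_{k_2} ≠ ∅. Then ≤ is a partial order on L (reflexive, antisymmetric and transitive). -/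
/-- The defining relations of the Artin group of type `Bₙ` on generators
`s₁, …, sₙ` (indexed here by `Fin n`, 0-based): commutation for distant generators,
braid relations `s_i s_{i+1} s_i = s_{i+1} s_i s_{i+1}` for `1 ≤ i ≤ n-2`, and the
relation `s_{n-1} s_n s_{n-1} s_n = s_n s_{n-1} s_n s_{n-1}`. -/
def artinBRels (n : ℕ) : Set (FreeGroup (Fin n)) :=
  {r | (∃ i j : Fin n, (i : ℕ) + 2 ≤ (j : ℕ) ∧
          r = FreeGroup.of i * FreeGroup.of j * (FreeGroup.of i)⁻¹ * (FreeGroup.of j)⁻¹) ∨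
       (∃ i j : Fin n, (i : ℕ) + 1 = (j : ℕ) ∧ (j : ℕ) + 1 < n ∧
          r = FreeGroup.of i * FreeGroup.of j * FreeGroup.of i *
              (FreeGroup.of j * FreeGroup.of i * FreeGroup.of j)⁻¹) ∨
       (∃ i j : Fin n, (i : ℕ) + 1 = (j : ℕ) ∧ (j : ℕ) + 1 = n ∧
          r = FreeGroup.of i * FreeGroup.of j * FreeGroup.of i * FreeGroup.of j *
              (FreeGroup.of j * FreeGroup.of i * FreeGroup.of j * FreeGroup.of i)⁻¹)}

/-- The Artin group of spherical type `Bₙ`. -/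
abbrev ArtinB (n : ℕ) : Type := PresentedGroup (artinBRels n)

/-- The maximal standard parabolic subgroup `P_i` of `A(Bₙ)` generated by all standard
generators except `s_i` (here `i : Fin n` is 0-based). -/
def ArtinBP (n : ℕ) (i : Fin n) : Subgroup (ArtinB n) :=
  Subgroup.closure {x : ArtinB n | ∃ j : Fin n, j ≠ i ∧ x = PresentedGroup.of j}

/-- The left coset `g P_i`, regarded as a subset of `A(Bₙ)`. -/
def cosetSet {n : ℕ} (g : ArtinB n) (i : Fin n) : Set (ArtinB n) :=
  {x : ArtinB n | ∃ p ∈ ArtinBP n i, x = g * p}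

/-- The carrier `L = {g P_i : g ∈ A(Bₙ), 1 ≤ i ≤ n} ∪ {0}`; `none` is the element `0`. -/
abbrev BLCarrier (n : ℕ) : Type :=
  Option {S : Set (ArtinB n) // ∃ (g : ArtinB n) (i : Fin n), S = cosetSet g i}

/-- The relation on `L`: `0 ≤ x` for all `x`, and `g₁ P_{k₁} ≤ g₂ P_{k₂}` iff
`k₁ ≤ k₂` and `g₁ P_{k₁} ∩ g₂ P_{k₂} ≠ ∅`. -/
def BLle {n : ℕ} : BLCarrier n → BLCarrier n → Prop
  | none, _ => True
  | some _, none => False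
  | some S, some T =>
      ∃ (g₁ : ArtinB n) (i₁ : Fin n) (g₂ : ArtinB n) (i₂ : Fin n),
        S.1 = cosetSet g₁ i₁ ∧ T.1 = cosetSet g₂ i₂ ∧
        (i₁ : ℕ) ≤ (i₂ : ℕ) ∧ (S.1 ∩ T.1).Nonempty

/-! The index `i` of a coset `g P_i` is determined by the coset, because `s_i ∉ P_i`: in a
permutation representation of `A(Bₙ)` on `ℕ`, `P_i` stabilises an initial segment that `s_i` does
not. This gives reflexivity, and antisymmetry since two cosets of the same `P_i` that meet are
equal. For transitivity, `i ≤ j ≤ k` gives `P_j ⊆ P_i P_k`, because `P_j` is generated by the two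
commuting parabolic subgroups on the indices below and above `j`; so if `u ∈ g P_i ∩ h P_j` and
`v ∈ h P_j ∩ g' P_k`, writing `u⁻¹ v = a b` with `a ∈ P_i`, `b ∈ P_k` gives
`u a = v b⁻¹ ∈ g P_i ∩ g' P_k`. -/

open Equiv MulAction Pointwise

lemma swap_succ_commute {a b : ℕ} (h : a + 2 ≤ b) :
    swap a (a + 1) * swap b (b + 1) = swap b (b + 1) * swap a (a + 1) := by
  ext x; simp only [Perm.mul_apply, swap_apply_def]; split_ifs <;> omega

lemma swap_succ_braid (a : ℕ) :
    swap a (a + 1) * swap (a + 1) (a + 1 + 1) * swap a (a + 1)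
      = swap (a + 1) (a + 1 + 1) * swap a (a + 1) * swap (a + 1) (a + 1 + 1) := by
  ext x; simp only [Perm.mul_apply, swap_apply_def]; split_ifs <;> omega

lemma swap_succ_mem_stabilizer_Iic_iff {a b : ℕ} :
    swap a (a + 1) ∈ stabilizer (Perm ℕ) (Set.Iic b) ↔ a ≠ b := by
  simp only [mem_stabilizer_iff, Set.ext_iff, Set.mem_smul_set_iff_inv_smul_mem, swap_inv,
    Perm.smul_def, Set.mem_Iic, swap_apply_def]
  constructor
  · rintro h rfl
    simpa using h (a + 1)
  · intro h k
    split_ifs <;> omega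

section Coset

variable {G : Type*} [Group G]

theorem Subgroup.eq_of_leftCoset_eq {H K : Subgroup G} {g h : G}
    (e : g • (H : Set G) = h • (K : Set G)) : H = K := by
  have hK : (h⁻¹ * g) • (H : Set G) = K := by
    rw [← leftCoset_assoc, e, leftCoset_assoc, inv_mul_cancel, one_leftCoset]
  have hg : h⁻¹ * g ∈ H := by
    have h1 : (1 : G) ∈ (h⁻¹ * g) • (H : Set G) := hK ▸ K.one_mem
    simpa using inv_mem ((mem_leftCoset_iff _).mp h1)
  rw [leftCoset_mem_leftCoset H hg] at hK
  exact SetLike.coe_injective hK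

theorem Subgroup.leftCoset_eq_of_inter_nonempty {H : Subgroup G} {g h : G}
    (hne : (g • (H : Set G) ∩ h • (H : Set G)).Nonempty) : g • (H : Set G) = h • (H : Set G) := by
  obtain ⟨u, hg, hh⟩ := hne
  rw [mem_leftCoset_iff] at hg hh
  rw [leftCoset_eq_iff]
  simpa [mul_assoc] using mul_mem hg (inv_mem hh)

theorem Subgroup.inter_leftCoset_nonempty_trans {H K M : Subgroup G} {g h k : G}
    (hKHM : (K : Set G) ⊆ H * M) (hgh : (g • (H : Set G) ∩ h • (K : Set G)).Nonempty)
    (hhk : (h • (K : Set G) ∩ k • (M : Set G)).Nonempty) :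
    (g • (H : Set G) ∩ k • (M : Set G)).Nonempty := by
  obtain ⟨u, hgu, hhu⟩ := hgh
  obtain ⟨v, hhv, hkv⟩ := hhk
  rw [mem_leftCoset_iff] at hgu hhu hhv hkv
  have huv : u⁻¹ * v ∈ K := by simpa [mul_assoc] using mul_mem (inv_mem hhu) hhv
  obtain ⟨a, ha, b, hb, hab : a * b = u⁻¹ * v⟩ := hKHM huv
  refine ⟨u * a, (mem_leftCoset_iff g).mpr ?_, (mem_leftCoset_iff k).mpr ?_⟩
  · simpa [mul_assoc] using mul_mem hgu ha
  · have : u * a = v * b⁻¹ := by rw [eq_mul_inv_iff_mul_eq, mul_assoc, hab, mul_inv_cancel_left]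
    simpa [this, mul_assoc] using mul_mem hkv (inv_mem hb)

end Coset

namespace ArtinB

variable {n : ℕ}

/-- `s_j` acts on `ℕ` as the transposition of `swapPos n j` and `swapPos n j + 1`: the type `A`
generators as in the symmetric group, and the last generator on the pair `n, n + 1`, where it
commutes with the others, so that the last relation holds trivially. -/
def swapPos (n : ℕ) (j : Fin n) : ℕ := if (j : ℕ) + 1 < n then j else n

lemma swapPos_injective : Function.Injective (swapPos n) := by
  intro i j h
  unfold swapPos at h
  ext
  split_ifs at h <;> omega

def swapGen (n : ℕ) (j : Fin n) : Perm ℕ := swap (swapPos n j) (swapPos n j + 1)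

lemma swapGen_rels : ∀ r ∈ artinBRels n, FreeGroup.lift (swapGen n) r = 1 := by
  rintro r (⟨i, j, hij, rfl⟩ | ⟨i, j, hij, hjn, rfl⟩ | ⟨i, j, hij, hjn, rfl⟩) <;>
    simp only [map_mul, map_inv, FreeGroup.lift_apply_of, mul_inv_eq_one, swapGen]
  · have hcomm := swap_succ_commute (show swapPos n i + 2 ≤ swapPos n j by
      unfold swapPos; split_ifs <;> omega)
    rw [hcomm, mul_inv_cancel_right]
  · have hi : swapPos n i = i := if_pos (by omega)
    have hj : swapPos n j = i + 1 := by unfold swapPos; rw [if_pos hjn, hij]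
    rw [hi, hj]
    exact swap_succ_braid _
  · have hcomm := swap_succ_commute (show swapPos n i + 2 ≤ swapPos n j by
      unfold swapPos; split_ifs <;> omega)
    simpa only [mul_assoc] using congrArg (fun x => x * x) hcomm

def toPerm (n : ℕ) : ArtinB n →* Perm ℕ := PresentedGroup.toGroup swapGen_rels

lemma artinBP_le_comap_stabilizer (i : Fin n) :
    ArtinBP n i ≤ (stabilizer (Perm ℕ) (Set.Iic (swapPos n i))).comap (toPerm n) := by
  refine (Subgroup.closure_le _).mpr ?_
  rintro _ ⟨j, hj, rfl⟩
  rw [SetLike.mem_coe, Subgroup.mem_comap, toPerm, PresentedGroup.toGroup.of]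
  exact swap_succ_mem_stabilizer_Iic_iff.mpr (swapPos_injective.ne hj)

theorem of_notMem_artinBP (i : Fin n) : PresentedGroup.of i ∉ ArtinBP n i := fun h =>
  swap_succ_mem_stabilizer_Iic_iff.mp (artinBP_le_comap_stabilizer i h) rfl

lemma of_mem_artinBP {i j : Fin n} (h : j ≠ i) : PresentedGroup.of j ∈ ArtinBP n i :=
  Subgroup.subset_closure ⟨j, h, rfl⟩

theorem artinBP_injective : Function.Injective (ArtinBP n) := by
  intro i j hij
  by_contra hne
  exact of_notMem_artinBP j (hij ▸ of_mem_artinBP (Ne.symm hne))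

def parabolic (n : ℕ) (S : Set (Fin n)) : Subgroup (ArtinB n) :=
  Subgroup.closure (PresentedGroup.of '' S)

lemma artinBP_eq_parabolic (i : Fin n) : ArtinBP n i = parabolic n {i}ᶜ := by
  unfold ArtinBP parabolic
  congr 1
  ext x
  simp [eq_comm]

lemma parabolic_mono {S T : Set (Fin n)} (h : S ⊆ T) : parabolic n S ≤ parabolic n T :=
  Subgroup.closure_mono (Set.image_mono h)

lemma parabolic_union (S T : Set (Fin n)) :
    parabolic n (S ∪ T) = parabolic n S ⊔ parabolic n T := by
  simp only [parabolic, Set.image_union, Subgroup.closure_union]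

lemma commute_of_of {i j : Fin n} (h : (i : ℕ) + 2 ≤ j) :
    Commute (PresentedGroup.of (rels := artinBRels n) i) (PresentedGroup.of j) := by
  rw [← commutatorElement_eq_one_iff_commute, commutatorElement_def]
  exact (QuotientGroup.eq_one_iff _).mpr (Subgroup.subset_normalClosure (Or.inl ⟨i, j, h, rfl⟩))

lemma parabolic_le_centralizer {S T : Set (Fin n)} (h : ∀ i ∈ S, ∀ j ∈ T, (i : ℕ) + 2 ≤ j) :
    parabolic n S ≤ Subgroup.centralizer (parabolic n T : Set (ArtinB n)) := by
  rw [parabolic, parabolic, Subgroup.centralizer_closure, Subgroup.closure_le]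
  rintro _ ⟨i, hi, rfl⟩ _ ⟨j, hj, rfl⟩
  exact (commute_of_of (h i hi j hj)).eq.symm

theorem coe_artinBP_subset_mul {i j k : Fin n} (hij : i ≤ j) (hjk : j ≤ k) :
    (ArtinBP n j : Set (ArtinB n)) ⊆ ArtinBP n i * ArtinBP n k := by
  have hcomm : parabolic n (Set.Iio j) ≤ Subgroup.normalizer (parabolic n (Set.Ioi j) : Set _) :=
    (parabolic_le_centralizer fun a ha b hb => by
      simp only [Set.mem_Iio, Set.mem_Ioi] at ha hb; omega).trans
        (Subgroup.centralizer_le_normalizer _)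
  rw [artinBP_eq_parabolic, ← Set.Iio_union_Ioi, Set.union_comm, parabolic_union,
    Subgroup.coe_mul_of_right_le_normalizer_left _ _ hcomm, artinBP_eq_parabolic,
    artinBP_eq_parabolic]
  refine Set.mul_subset_mul (parabolic_mono fun a ha => ?_) (parabolic_mono fun a ha => ?_)
  · exact ne_of_gt (lt_of_le_of_lt hij ha)
  · exact ne_of_lt (lt_of_lt_of_le ha hjk)

lemma cosetSet_eq_smul (g : ArtinB n) (i : Fin n) :
    cosetSet g i = g • (ArtinBP n i : Set (ArtinB n)) := by
  ext x
  rw [mem_leftCoset_iff]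
  exact ⟨by rintro ⟨p, hp, rfl⟩; simpa using hp, fun h => ⟨g⁻¹ * x, h, by group⟩⟩

lemma eq_of_cosetSet_eq {g h : ArtinB n} {i j : Fin n} (e : cosetSet g i = cosetSet h j) :
    i = j := by
  rw [cosetSet_eq_smul, cosetSet_eq_smul] at e
  exact artinBP_injective (Subgroup.eq_of_leftCoset_eq e)

end ArtinB

namespace BLle

open ArtinB

variable {n : ℕ}

theorem refl : ∀ x : BLCarrier n, BLle x x
  | none => trivial
  | some S => by
    obtain ⟨g, i, hS⟩ := S.2
    refine ⟨g, i, g, i, hS, hS, le_rfl, g, ?_⟩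
    rw [Set.inter_self, hS, cosetSet_eq_smul]
    exact mem_own_leftCoset _ g

theorem antisymm : ∀ x y : BLCarrier n, BLle x y → BLle y x → x = y
  | none, none, _, _ => rfl
  | none, some _, _, h => h.elim
  | some _, none, h, _ => h.elim
  | some S, some T, ⟨_, i₁, _, i₂, hS, hT, hle, hne⟩, ⟨_, j₁, _, j₂, hT', hS', hle', _⟩ => by
    have hi₁ : i₁ = j₂ := eq_of_cosetSet_eq (hS.symm.trans hS')
    have hi₂ : i₂ = j₁ := eq_of_cosetSet_eq (hT.symm.trans hT')
    obtain rfl : i₁ = i₂ := le_antisymm hle (by rw [hi₁, hi₂]; exact hle')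
    rw [hS, hT, cosetSet_eq_smul, cosetSet_eq_smul] at hne
    refine congrArg some (Subtype.ext ?_)
    rw [hS, hT, cosetSet_eq_smul, cosetSet_eq_smul]
    exact Subgroup.leftCoset_eq_of_inter_nonempty hne

theorem trans : ∀ x y z : BLCarrier n, BLle x y → BLle y z → BLle x z
  | none, _, _, _, _ => trivial
  | some _, none, _, h, _ => h.elim
  | some _, some _, none, _, h => h.elim
  | some S, some T, some U, ⟨g₁, i₁, g₂, i₂, hS, hT, hij, hST⟩,
      ⟨_, j₁, h₂, j₂, hT', hU, hjk, hTU⟩ => by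
    obtain rfl : i₂ = j₁ := eq_of_cosetSet_eq (hT.symm.trans hT')
    refine ⟨g₁, i₁, h₂, j₂, hS, hU, hij.trans hjk, ?_⟩
    rw [hS, hT] at hST
    rw [hT, hU] at hTU
    rw [hS, hU]
    simp only [cosetSet_eq_smul] at hST hTU ⊢
    exact Subgroup.inter_leftCoset_nonempty_trans (coe_artinBP_subset_mul hij hjk) hST hTU

end BLle

theorem stmt16_general (n : ℕ) :
    (∀ x : BLCarrier n, BLle x x) ∧
    (∀ x y : BLCarrier n, BLle x y → BLle y x → x = y) ∧
    (∀ x y z : BLCarrier n, BLle x y → BLle y z → BLle x z) :=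
  ⟨BLle.refl, BLle.antisymm, BLle.trans⟩

/-- The relation `≤` on `L = {g P_i} ∪ {0}` is a partial order. -/
theorem stmt16 (n : ℕ) (hn : 2 ≤ n) :
    (∀ x : BLCarrier n, BLle x x) ∧
    (∀ x y : BLCarrier n, BLle x y → BLle y x → x = y) ∧
    (∀ x y z : BLCarrier n, BLle x y → BLle y z → BLle x z) :=
  stmt16_general n
end
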